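/- arXiv:2009.07254 — 13 statements merged into one kernel-verified Lean document; each statement's English description precedes it below -/
import Mathlib

section
/- Let Z be a Dedekind domain with fraction field Q. Let P_1(t),…,P_ℓ(t) ∈ Z[t] be ℓ ≥ 2 nonzero polynomials in one variable t that are coprime in Q[t] and satisfy: (AV) no non-unit of Z divides all the values P_1(z),…,P_ℓ(z) for all z ∈ Z. Then there exists an element m ∈ Z such that P_1(m),…,P_ℓ(m) are coprime in Z. -/
/-!
Clearing denominators in a Bézout identity over `Q[t]` gives a nonzero `r ∈ Z` lying in the ideal
generated by `P₁(m), …, P_ℓ(m)` for every `m`, so only the finitely many primes `𝔮 ∣ r` can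
divide these values. For each such `𝔮` let `e_𝔮` be the exact power of `𝔮` dividing the ideal
generated by all values of all `P i`, and pick a value `P_i(z)` not in `𝔮 ^ (e_𝔮 + 1)`. By the
Chinese remainder theorem one `m` is congruent to every such `z` modulo `𝔮 ^ (e_𝔮 + 1)`; then the
values at `m` generate exactly the ideal generated by all values, and condition (AV) says that
no proper principal ideal contains the latter.
-/

open Polynomial UniqueFactorizationMonoid

theorem Ideal.span_range_eq_top_of_forall_dvd_isUnit {A ι : Type*} [CommRing A]
    [IsPrincipalIdealRing A] {f : ι → A} (h : ∀ d, (∀ i, d ∣ f i) → IsUnit d) :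
    Ideal.span (Set.range f) = ⊤ := by
  obtain ⟨g, hg⟩ := (IsPrincipalIdealRing.principal (Ideal.span (Set.range f))).principal
  rw [Ideal.submodule_span_eq] at hg
  rw [hg, Ideal.span_singleton_eq_top]
  refine h g fun i => Ideal.mem_span_singleton.mp ?_
  rw [← hg]
  exact Ideal.subset_span ⟨i, rfl⟩

theorem Ideal.exists_le_pow_and_not_le_pow_succ {R : Type*} [CommRing R] [IsDomain R]
    [IsNoetherianRing R] {I q : Ideal R} (hI : I ≠ ⊥) (hq : q ≠ ⊤) :
    ∃ e, I ≤ q ^ e ∧ ¬ I ≤ q ^ (e + 1) := by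
  classical
  have hex : ∃ n, ¬ I ≤ q ^ (n + 1) := by
    by_contra! hle
    exact hI (eq_bot_iff.mpr (Ideal.iInf_pow_eq_bot_of_isDomain q hq ▸
      le_iInf fun n => (hle n).trans (Ideal.pow_le_pow_right n.le_succ)))
  refine ⟨Nat.find hex, ?_, Nat.find_spec hex⟩
  rcases h : Nat.find hex with _ | k
  · simp
  · exact not_not.mp (Nat.find_min hex (h ▸ k.lt_succ_self))

theorem Ideal.le_of_forall_le_pow_imp_le_pow {R : Type*} [CommRing R] [IsDedekindDomain R]
    {I J : Ideal R} (hJ : J ≠ ⊥) (h : ∀ q : Ideal R, Prime q → ∀ n, J ≤ q ^ n → I ≤ q ^ n) :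
    I ≤ J := by
  classical
  rcases eq_or_ne I ⊥ with rfl | hI
  · exact bot_le
  rw [← Ideal.dvd_iff_le, dvd_iff_normalizedFactors_le_normalizedFactors hJ hI,
    Multiset.le_iff_count]
  intro q
  by_cases hq : q ∈ normalizedFactors J
  swap
  · simp [Multiset.count_eq_zero_of_notMem hq]
  have hqp : Prime q := prime_of_normalized_factor q hq
  have hqprime : q.IsPrime := Ideal.isPrime_of_prime hqp
  obtain ⟨eJ, hJle, hJlt⟩ := exists_le_pow_and_not_le_pow_succ hJ hqprime.ne_top
  obtain ⟨eI, hIle, hIlt⟩ := exists_le_pow_and_not_le_pow_succ hI hqprime.ne_top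
  rw [Ideal.count_normalizedFactors_eq hJle hJlt, Ideal.count_normalizedFactors_eq hIle hIlt]
  by_contra! hlt
  exact hIlt ((h q hqp eJ hJle).trans (Ideal.pow_le_pow_right hlt))

namespace Polynomial

theorem exists_C_mem_span_of_span_map_eq_top {R K ι : Type*} [CommRing R]
    [CommRing K] [Algebra R K] [IsFractionRing R K] {P : ι → R[X]}
    (h : Ideal.span (Set.range fun i => (P i).map (algebraMap R K)) = ⊤) :
    ∃ r ∈ nonZeroDivisors R, C r ∈ Ideal.span (Set.range P) := by
  let := Polynomial.algebra R K
  have := Polynomial.isLocalization (nonZeroDivisors R) K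
  have h1 : (1 : K[X]) ∈ (Ideal.span (Set.range P)).map (algebraMap R[X] K[X]) := by
    rw [Ideal.map_span, ← Set.range_comp]
    exact h ▸ Submodule.mem_top
  obtain ⟨⟨⟨a, ha⟩, ⟨_, r, hr, rfl⟩⟩, hra⟩ :=
    (IsLocalization.mem_map_algebraMap_iff (Submonoid.map C (nonZeroDivisors R)) K[X]).mp h1
  refine ⟨r, hr, ?_⟩
  convert ha
  exact map_injective _ (IsFractionRing.injective R K) (by simpa using hra)

theorem eval_sub_eval_mem {R : Type*} [CommRing R] {J : Ideal R} {a b : R} (h : a - b ∈ J)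
    (p : R[X]) : p.eval a - p.eval b ∈ J :=
  J.mem_of_dvd (sub_dvd_eval_sub a b p) h

variable {R ι : Type*} [CommRing R]

def valuesIdeal (P : ι → R[X]) (m : R) : Ideal R :=
  Ideal.span (Set.range fun i => (P i).eval m)

def fixedDivisor (P : ι → R[X]) : Ideal R :=
  ⨆ m, valuesIdeal P m

variable {P : ι → R[X]} {J : Ideal R}

theorem valuesIdeal_le_iff {m : R} : valuesIdeal P m ≤ J ↔ ∀ i, (P i).eval m ∈ J := by
  simp [valuesIdeal, Ideal.span_le, Set.range_subset_iff]

theorem fixedDivisor_le_iff : fixedDivisor P ≤ J ↔ ∀ m i, (P i).eval m ∈ J := by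
  simp [fixedDivisor, valuesIdeal_le_iff]

theorem valuesIdeal_le_fixedDivisor (P : ι → R[X]) (m : R) : valuesIdeal P m ≤ fixedDivisor P :=
  le_iSup (valuesIdeal P) m

theorem mem_valuesIdeal_of_C_mem_span {r : R} (h : C r ∈ Ideal.span (Set.range P)) (m : R) :
    r ∈ valuesIdeal P m := by
  simpa [valuesIdeal, Ideal.map_span, ← Set.range_comp, Function.comp_def] using
    Ideal.mem_map_of_mem (evalRingHom m) h

theorem exists_forall_not_valuesIdeal_le [IsDedekindDomain R] (P : ι → R[X])
    {s : Finset (Ideal R)} (hs : ∀ q ∈ s, Prime q) (e : Ideal R → ℕ)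
    (he : ∀ q ∈ s, ¬ fixedDivisor P ≤ q ^ e q) :
    ∃ m, ∀ q ∈ s, ¬ valuesIdeal P m ≤ q ^ e q := by
  simp only [fixedDivisor_le_iff, not_forall] at he
  choose z i hz using he
  obtain ⟨m, hm⟩ := IsDedekindDomain.exists_forall_sub_mem_ideal id e hs
    (fun _ _ _ _ => id) fun q => z q.1 q.2
  refine ⟨m, fun q hq hle => hz q hq ?_⟩
  simpa using sub_mem (valuesIdeal_le_iff.mp hle (i q hq))
    (eval_sub_eval_mem (hm q hq) (P (i q hq)))

theorem exists_valuesIdeal_eq_fixedDivisor [IsDedekindDomain R] (P : ι → R[X]) {r : R}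
    (hr : r ≠ 0) (hrP : ∀ m, r ∈ valuesIdeal P m) : ∃ m, valuesIdeal P m = fixedDivisor P := by
  classical
  set s := (normalizedFactors (Ideal.span {r})).toFinset
  have hs : ∀ q ∈ s, Prime q := fun q hq =>
    prime_of_normalized_factor q (Multiset.mem_toFinset.mp hq)
  have hbot : ∀ m, valuesIdeal P m ≠ ⊥ := fun m h => hr (by simpa [h] using hrP m)
  have hI : fixedDivisor P ≠ ⊥ := ne_bot_of_le_ne_bot (hbot 0) (valuesIdeal_le_fixedDivisor P 0)
  have hexp : ∀ q, ∃ e, q ∈ s → fixedDivisor P ≤ q ^ e ∧ ¬ fixedDivisor P ≤ q ^ (e + 1) := by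
    intro q
    by_cases hq : q ∈ s
    · obtain ⟨e, he⟩ := Ideal.exists_le_pow_and_not_le_pow_succ hI
        (Ideal.isPrime_of_prime (hs q hq)).ne_top
      exact ⟨e, fun _ => he⟩
    · exact ⟨0, fun h => absurd h hq⟩
  choose e he using hexp
  obtain ⟨m, hm⟩ := exists_forall_not_valuesIdeal_le P hs (e · + 1) fun q hq => (he q hq).2
  refine ⟨m, le_antisymm (valuesIdeal_le_fixedDivisor P m)
    (Ideal.le_of_forall_le_pow_imp_le_pow (hbot m) fun q hq n hn => ?_)⟩
  rcases n.eq_zero_or_pos with rfl | hn0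
  · simp
  have hqs : q ∈ s := Multiset.mem_toFinset.mpr <|
    (Ideal.mem_normalizedFactors_iff (by simpa using hr)).mpr ⟨Ideal.isPrime_of_prime hq,
      Ideal.span_singleton_le_iff_mem _ |>.mpr (Ideal.pow_le_self hn0.ne' (hn (hrP m)))⟩
  have hn_le : n ≤ e q := by
    by_contra! hlt
    exact hm q hqs (hn.trans (Ideal.pow_le_pow_right hlt))
  exact (he q hqs).1.trans (Ideal.pow_le_pow_right hn_le)

end Polynomial

theorem coprime_schinzel_dedekind_general
    (Z : Type*) [CommRing Z] [IsDedekindDomain Z]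
    (ℓ : ℕ)
    (P : Fin ℓ → Polynomial Z)
    (hcop : ∀ d : Polynomial (FractionRing Z),
      (∀ i, d ∣ (P i).map (algebraMap Z (FractionRing Z))) → IsUnit d)
    (hAV : ∀ a : Z, (∀ z : Z, ∀ i, a ∣ (P i).eval z) → IsUnit a) :
    ∃ m : Z, ∀ d : Z, (∀ i, d ∣ (P i).eval m) → IsUnit d := by
  obtain ⟨r, hr, hrP⟩ :=
    exists_C_mem_span_of_span_map_eq_top (Ideal.span_range_eq_top_of_forall_dvd_isUnit hcop)
  obtain ⟨m, hm⟩ := exists_valuesIdeal_eq_fixedDivisor P (nonZeroDivisors.ne_zero hr)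
    (mem_valuesIdeal_of_C_mem_span hrP)
  refine ⟨m, fun d hd => hAV d fun z i => Ideal.mem_span_singleton.mp ?_⟩
  have hle : valuesIdeal P m ≤ Ideal.span {d} :=
    valuesIdeal_le_iff.mpr fun i => Ideal.mem_span_singleton.mpr (hd i)
  exact fixedDivisor_le_iff.mp (hm ▸ hle) z i

theorem coprime_schinzel_dedekind
    (Z : Type*) [CommRing Z] [IsDomain Z] [IsDedekindDomain Z]
    (ℓ : ℕ) (hℓ : 2 ≤ ℓ)
    (P : Fin ℓ → Polynomial Z)
    (hne : ∀ i, P i ≠ 0)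
    (hcop : ∀ d : Polynomial (FractionRing Z),
      (∀ i, d ∣ (P i).map (algebraMap Z (FractionRing Z))) → IsUnit d)
    (hAV : ∀ a : Z, (∀ z : Z, ∀ i, a ∣ (P i).eval z) → IsUnit a) :
    ∃ m : Z, ∀ d : Z, (∀ i, d ∣ (P i).eval m) → IsUnit d :=
  coprime_schinzel_dedekind_general Z ℓ P hcop hAV
end

section
/- Let Z be a Dedekind domain with fraction field Q, and let P_1(t),…,P_ℓ(t) ∈ Z[t] be ℓ ≥ 2 nonzero polynomials, coprime in Q[t], satisfying: (AV) no non-unit of Z divides all values P_1(z),…,P_ℓ(z) for all z ∈ Z. Let δ ∈ Z be a nonzero element of Z lying in the ideal P_1·Z[t] + ⋯ + P_ℓ·Z[t], let Q_1,…,Q_r be the prime ideals of Z dividing the principal ideal δZ, let 𝔦 be the ideal of Z generated by all values P_i(z) (z ∈ Z, 1 ≤ i ≤ ℓ), and for each i let g_i ≥ 0 be the exponent of Q_i in the prime ideal factorization of 𝔦 (i.e., the largest integer g with 𝔦 ⊆ Q_i^g). Let ω ∈ Z be any multiple of δ and let α ∈ Z be an element such that for each i = 1,…,r, not all of P_1(α),…,P_ℓ(α)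 lie in Q_i^{g_i+1}. Then for every z ∈ Z, the elements P_1(α + zω),…,P_ℓ(α + zω) are coprime in Z. -/
/-!
Let `d` divide every `P j (α + z ω)`. Evaluating a relation `δ = ∑ Aⱼ Pⱼ` at `α + z ω` gives
`d ∣ δ`, so `d ∣ ω` and hence `d` also divides every `P j α`. Thus every prime factor of `dZ` is
some `Q i`, and it occurs in `dZ` with exponent at most `g i` (otherwise all `P j α` would lie in
`Q i ^ (g i + 1)`), which is its exponent in `𝔦`. Hence `𝔦 ⊆ dZ`, i.e. `d` divides every value
`P j z`, and (AV) makes `d` a unit.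
-/

open Polynomial UniqueFactorizationMonoid

theorem Polynomial.dvd_of_C_mem_span_of_dvd_eval {R ι : Type*} [CommRing R] {P : ι → R[X]}
    {c d x : R} (hc : C c ∈ Ideal.span (Set.range P)) (hd : ∀ i, d ∣ (P i).eval x) : d ∣ c := by
  have hle : Ideal.span (Set.range P) ≤ (Ideal.span {d}).comap (evalRingHom x) :=
    Ideal.span_le.2 <| Set.range_subset_iff.2 fun i => by
      simpa [Ideal.mem_span_singleton] using hd i
  simpa [Ideal.mem_span_singleton] using hle hc

theorem UniqueFactorizationMonoid.dvd_of_forall_pow_dvd_imp {R : Type*}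
    [CommMonoidWithZero R] [UniqueFactorizationMonoid R] [NormalizationMonoid R] {a b : R}
    (hb : b ≠ 0) (h : ∀ p, Prime p → ∀ n : ℕ, p ^ n ∣ b → p ^ n ∣ a) : b ∣ a := by
  classical
  rcases eq_or_ne a 0 with rfl | ha
  · exact dvd_zero b
  rw [dvd_iff_normalizedFactors_le_normalizedFactors hb ha, Multiset.le_iff_count]
  intro p
  by_cases hp : p ∈ normalizedFactors b
  · have hpp := prime_of_normalized_factor p hp
    have hcount : ∀ {x : R}, x ≠ 0 → emultiplicity p x = (normalizedFactors x).count p :=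
      fun hx => by
        rw [emultiplicity_eq_count_normalizedFactors hpp.irreducible hx,
          normalize_normalized_factor p hp]
    have hdvd : p ^ (normalizedFactors b).count p ∣ a :=
      h p hpp _ (pow_dvd_of_le_emultiplicity (hcount hb).ge)
    exact_mod_cast (hcount ha) ▸ le_emultiplicity_of_pow_dvd hdvd
  · simp [Multiset.count_eq_zero_of_notMem hp]

theorem Ideal.le_of_forall_le_pow_imp {R : Type*} [CommRing R] [IsDedekindDomain R]
    {I J : Ideal R} (hJ : J ≠ ⊥)
    (h : ∀ p : Ideal R, p.IsPrime → p ≠ ⊥ → ∀ n : ℕ, J ≤ p ^ n → I ≤ p ^ n) : I ≤ J := by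
  rw [← Ideal.dvd_iff_le]
  refine dvd_of_forall_pow_dvd_imp hJ fun p hp n hpn => ?_
  rw [Ideal.dvd_iff_le] at hpn ⊢
  exact h p (Ideal.isPrime_of_prime hp) hp.ne_zero n hpn

theorem Ideal.le_span_singleton_of_le_pow {R ι : Type*} [CommRing R] [IsDedekindDomain R]
    {I : Ideal R} {d : R} (hd : d ≠ 0) {Q : ι → Ideal R} {g : ι → ℕ}
    (hQ : ∀ p : Ideal R, p.IsPrime → p ≠ ⊥ → d ∈ p → ∃ i, p = Q i)
    (hdQ : ∀ i, ¬ Ideal.span {d} ≤ Q i ^ (g i + 1)) (hIQ : ∀ i, I ≤ Q i ^ g i) :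
    I ≤ Ideal.span {d} := by
  refine Ideal.le_of_forall_le_pow_imp (by simpa using hd) fun p hp hp0 n hdn => ?_
  rcases Nat.eq_zero_or_pos n with rfl | hn
  · simp
  obtain ⟨i, rfl⟩ := hQ p hp hp0 <|
    (hdn.trans (Ideal.pow_le_self hn.ne')) (Ideal.mem_span_singleton_self d)
  have hng : n ≤ g i := by
    by_contra! hgn
    exact hdQ i (hdn.trans (Ideal.pow_le_pow_right hgn))
  exact (hIQ i).trans (Ideal.pow_le_pow_right hng)

theorem dedekind_arithmetic_progression_coprime_values_general
    (Z : Type*) [CommRing Z] [IsDedekindDomain Z]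
    (ℓ : ℕ)
    (P : Fin ℓ → Polynomial Z)
    (hAV : ∀ a : Z, (∀ z : Z, ∀ i, a ∣ (P i).eval z) → IsUnit a)
    (δ : Z) (hδ0 : δ ≠ 0)
    (hδ : (Polynomial.C δ : Polynomial Z) ∈ Ideal.span (Set.range P))
    (r : ℕ) (Q : Fin r → Ideal Z)
    -- `Q_1, …, Q_r` are exactly the prime ideals dividing the principal ideal `δZ`
    (hQdiv : ∀ I : Ideal Z, I.IsPrime → I ≠ ⊥ →
      (Ideal.span {δ} ≤ I ↔ ∃ i, I = Q i))
    -- `𝔦` is the ideal generated by all the values `P i z`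
    (𝔦 : Ideal Z)
    (h𝔦 : 𝔦 = Ideal.span {x : Z | ∃ (z : Z) (i : Fin ℓ), x = (P i).eval z})
    -- `g i` is the exponent of `Q i` in the prime factorization of `𝔦`
    (g : Fin r → ℕ)
    (hg : ∀ i, 𝔦 ≤ (Q i) ^ (g i) ∧ ¬ 𝔦 ≤ (Q i) ^ (g i + 1))
    (ω : Z) (hω : δ ∣ ω)
    (α : Z)
    (hα : ∀ i : Fin r, ∃ j : Fin ℓ, (P j).eval α ∉ (Q i) ^ (g i + 1)) :
    ∀ z : Z, ∀ d : Z, (∀ j, d ∣ (P j).eval (α + z * ω)) → IsUnit d := by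
  intro z d hd
  have hdδ : d ∣ δ := dvd_of_C_mem_span_of_dvd_eval hδ hd
  have hdα : ∀ j, d ∣ (P j).eval α := fun j => by
    have hstep : d ∣ α + z * ω - α := by simpa using (hdδ.trans hω).mul_left z
    exact (dvd_sub_right (hd j)).1 (hstep.trans (sub_dvd_eval_sub _ _ _))
  have h𝔦d : 𝔦 ≤ Ideal.span {d} := by
    refine Ideal.le_span_singleton_of_le_pow (ne_zero_of_dvd_ne_zero hδ0 hdδ)
      (fun p hp hp0 hdp => ?_) (fun i hle => ?_) fun i => (hg i).1
    · exact (hQdiv p hp hp0).1 <| (Ideal.span_singleton_le_iff_mem p).2 <|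
        Ideal.mem_of_dvd p hdδ hdp
    · obtain ⟨j, hj⟩ := hα i
      exact hj (hle (Ideal.mem_span_singleton.2 (hdα j)))
  refine hAV d fun z' i => Ideal.mem_span_singleton.1 (h𝔦d ?_)
  exact h𝔦 ▸ Ideal.subset_span ⟨z', i, rfl⟩

theorem dedekind_arithmetic_progression_coprime_values
    (Z : Type*) [CommRing Z] [IsDomain Z] [IsDedekindDomain Z]
    (ℓ : ℕ) (hℓ : 2 ≤ ℓ)
    (P : Fin ℓ → Polynomial Z)
    (hne : ∀ i, P i ≠ 0)
    (hcop : ∀ d : Polynomial (FractionRing Z),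
      (∀ i, d ∣ (P i).map (algebraMap Z (FractionRing Z))) → IsUnit d)
    (hAV : ∀ a : Z, (∀ z : Z, ∀ i, a ∣ (P i).eval z) → IsUnit a)
    (δ : Z) (hδ0 : δ ≠ 0)
    (hδ : (Polynomial.C δ : Polynomial Z) ∈ Ideal.span (Set.range P))
    (r : ℕ) (Q : Fin r → Ideal Z)
    (hQprime : ∀ i, (Q i).IsPrime) (hQbot : ∀ i, Q i ≠ ⊥)
    -- `Q_1, …, Q_r` are exactly the prime ideals dividing the principal ideal `δZ`
    (hQdiv : ∀ I : Ideal Z, I.IsPrime → I ≠ ⊥ →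
      (Ideal.span {δ} ≤ I ↔ ∃ i, I = Q i))
    -- `𝔦` is the ideal generated by all the values `P i z`
    (𝔦 : Ideal Z)
    (h𝔦 : 𝔦 = Ideal.span {x : Z | ∃ (z : Z) (i : Fin ℓ), x = (P i).eval z})
    -- `g i` is the exponent of `Q i` in the prime factorization of `𝔦`
    (g : Fin r → ℕ)
    (hg : ∀ i, 𝔦 ≤ (Q i) ^ (g i) ∧ ¬ 𝔦 ≤ (Q i) ^ (g i + 1))
    (ω : Z) (hω : δ ∣ ω)
    (α : Z)
    (hα : ∀ i : Fin r, ∃ j : Fin ℓ, (P j).eval α ∉ (Q i) ^ (g i + 1)) :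
    ∀ z : Z, ∀ d : Z, (∀ j, d ∣ (P j).eval (α + z * ω)) → IsUnit d :=
  dedekind_arithmetic_progression_coprime_values_general Z ℓ P hAV δ hδ0 hδ r Q hQdiv 𝔦 h𝔦 g hg ω hω
    α hα
end

section
/- Let p be a prime number and let Z be the integral closure of ℤ_p (the p-adic integers) in an algebraic closure of ℚ_p. Then: (i) Z has nonzero non-units that are not divisible by any prime element of Z (in fact Z has no prime elements at all); and (ii) Z satisfies the coprime Schinzel Hypothesis CopSch(1,1): for any ℓ ≥ 2 nonzero polynomials P_1(t),…,P_ℓ(t) ∈ Z[t], coprime over the fraction field of Z, such that no non-unit of Z divides all values P_i(m) (m ∈ Z, i = 1,…,ℓ), there exists m ∈ Z such that P_1(m),…,P_ℓ(m) are coprime in Z. -/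
noncomputable instance algebraPadicIntAlgClosure (p : ℕ) [Fact p.Prime] :
    Algebra ℤ_[p] (AlgebraicClosure ℚ_[p]) :=
  ((algebraMap ℚ_[p] (AlgebraicClosure ℚ_[p])).comp
    (algebraMap ℤ_[p] ℚ_[p])).toAlgebra

/-- The integral closure of `ℤ_p` in an algebraic closure of `ℚ_p`. -/
noncomputable def PadicIntBar (p : ℕ) [Fact p.Prime] : Type _ :=
  integralClosure ℤ_[p] (AlgebraicClosure ℚ_[p])

noncomputable instance (p : ℕ) [Fact p.Prime] : CommRing (PadicIntBar p) :=
  inferInstanceAs (CommRing (integralClosure ℤ_[p] (AlgebraicClosure ℚ_[p])))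

/-! The spectral norm on `PadicAlgCl p` is multiplicative, and an element is integral over `ℤ_[p]`
exactly when its norm is at most `1`. Hence divisibility in the integral closure `Z` is comparison
of norms: `Z` is a valuation ring (so local and Bézout) and `p` is a nonzero non-unit. As the
ambient field is algebraically closed, every monic nonconstant polynomial over `Z` has a root in
`Z`; so every element is a square, hence not prime, and the residue field is algebraically
closed, hence infinite.

For (ii), a generator of the ideal spanned by all coefficients of the `P i` divides every value,
so it is a unit; in the local ring `Z` some coefficient of some `P i` is then a unit. The reduction
of that `P i` is a nonzero polynomial over an infinite field, and any lift `m` of a non-root makes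
`P i (m)` a unit. -/

open Polynomial IsLocalRing

section IntegralClosure

variable {R L : Type*} [CommRing R] [Field L] [IsAlgClosed L] [Algebra R L]

theorem integralClosure.exists_isRoot {P : (integralClosure R L)[X]} (hP : P.Monic)
    (hdeg : P.natDegree ≠ 0) : ∃ x, P.IsRoot x := by
  obtain ⟨y, hy⟩ := IsAlgClosed.exists_root (P.map (algebraMap _ L)) fun h => hdeg <| by
    rw [← hP.natDegree_map (algebraMap _ L), natDegree_eq_zero_iff_degree_le_zero.mpr h.le]
  have hyO : IsIntegral (integralClosure R L) y := ⟨P, hP, by rwa [IsRoot, eval_map] at hy⟩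
  exact ⟨⟨y, isIntegral_trans y hyO⟩, hy.of_map Subtype.val_injective⟩

theorem integralClosure.isSquare (x : integralClosure R L) : IsSquare x := by
  obtain ⟨y, hy⟩ := exists_isRoot (monic_X_pow_sub_C x two_ne_zero)
    (by rw [natDegree_X_pow_sub_C]; exact two_ne_zero)
  refine ⟨y, ?_⟩
  rw [IsRoot, eval_sub, eval_pow, eval_X, eval_C, sub_eq_zero] at hy
  rw [← hy, sq]

end IntegralClosure

namespace IsLocalRing

variable {R : Type*} [CommRing R] [IsLocalRing R]

theorem isAlgClosed_residueField_of_exists_isRoot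
    (h : ∀ P : R[X], P.Monic → P.natDegree ≠ 0 → ∃ x, P.IsRoot x) :
    IsAlgClosed (ResidueField R) := by
  refine IsAlgClosed.of_exists_root _ fun f hf hirr => ?_
  have hlift : f ∈ lifts (residue R) := map_surjective _ residue_surjective f
  obtain ⟨F, hFf, hFdeg, hFm⟩ := lifts_and_natDegree_eq_and_monic hlift hf
  obtain ⟨x, hx⟩ := h F hFm (hFdeg ▸ hirr.natDegree_pos.ne')
  exact ⟨residue R x, hFf ▸ hx.map⟩

theorem exists_isUnit_eval [Infinite (ResidueField R)] {Q : R[X]} {j : ℕ}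
    (hj : IsUnit (Q.coeff j)) : ∃ m, IsUnit (Q.eval m) := by
  have hQ : Q.map (residue R) ≠ 0 := fun h0 =>
    (residue_ne_zero_iff_isUnit _).mpr hj (by rw [← coeff_map, h0, coeff_zero])
  obtain ⟨y, hy⟩ : ∃ y, (Q.map (residue R)).eval y ≠ 0 := by
    by_contra! h
    exact hQ (zero_of_eval_zero _ h)
  obtain ⟨m, rfl⟩ := residue_surjective y
  refine ⟨m, (residue_ne_zero_iff_isUnit _).mp ?_⟩
  rwa [eval_map, eval₂_at_apply] at hy

theorem exists_isUnit_coeff_of_isBezout [IsBezout R] {ι : Type*} [Finite ι] (P : ι → R[X])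
    (hP : ∀ a : R, (∀ m i, a ∣ (P i).eval m) → IsUnit a) :
    ∃ i j, IsUnit ((P i).coeff j) := by
  by_contra! h
  set I := Ideal.span (⋃ i, ((P i).coeffs : Set R))
  have hfg : I.FG :=
    ⟨(Set.finite_iUnion fun i => (P i).coeffs.finite_toSet).toFinset, by simp [I]⟩
  obtain ⟨a, ha⟩ := (IsBezout.isPrincipal_of_FG I hfg).principal
  have hCa : ∀ i, C a ∣ P i := fun i => (C_dvd_iff_dvd_coeff _ _).mpr fun j => by
    by_cases hj : (P i).coeff j = 0
    · simp [hj]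
    · have : (P i).coeff j ∈ I :=
        Ideal.subset_span (Set.mem_iUnion.mpr ⟨i, coeff_mem_coeffs hj⟩)
      rw [ha] at this
      exact Ideal.mem_span_singleton.mp this
  have haI : a ∈ I := ha ▸ Ideal.mem_span_singleton_self a
  have hIm : I ≤ maximalIdeal R := Ideal.span_le.mpr <| Set.iUnion_subset fun i c hc => by
    obtain ⟨j, -, rfl⟩ := mem_coeffs_iff.mp hc
    exact h i j
  exact hIm haI (hP a fun m i => by simpa using eval_dvd (x := m) (hCa i))

theorem exists_forall_dvd_eval_isUnit [IsBezout R] [Infinite (ResidueField R)] {ι : Type*}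
    [Finite ι] (P : ι → R[X]) (hP : ∀ a : R, (∀ m i, a ∣ (P i).eval m) → IsUnit a) :
    ∃ m, ∀ d, (∀ i, d ∣ (P i).eval m) → IsUnit d := by
  obtain ⟨i, j, hij⟩ := exists_isUnit_coeff_of_isBezout P hP
  obtain ⟨m, hm⟩ := exists_isUnit_eval hij
  exact ⟨m, fun d hd => isUnit_of_dvd_unit (hd i) hm⟩

end IsLocalRing

variable {p : ℕ} [Fact p.Prime]

/- Elaborated plainly, `IsScalarTower ℤ_[p] ℚ_[p] (PadicAlgCl p)` uses the `SMul` that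
`AlgebraicClosure` provides, not the one of `algebraPadicIntAlgClosure`, which `integralClosure`
is taken with; so the instance names the latter. -/
instance : @IsScalarTower ℤ_[p] ℚ_[p] (PadicAlgCl p) _ _ (algebraPadicIntAlgClosure p).toSMul :=
  .of_algebraMap_eq' rfl

namespace PadicAlgCl

theorem isIntegral_iff_norm_le_one (x : PadicAlgCl p) :
    IsIntegral ℤ_[p] x ↔ ‖x‖ ≤ 1 := by
  constructor
  · rintro ⟨F, hF, hx⟩
    have hroot : aeval x (F.map (algebraMap ℤ_[p] ℚ_[p])) = 0 := by
      rwa [aeval_map_algebraMap, aeval_def]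
    refine (norm_root_le_spectralValue (f := spectralAlgNorm ℚ_[p] (PadicAlgCl p))
      isPowMul_spectralNorm isNonarchimedean_spectralNorm (hF.map _) hroot).trans ?_
    rw [spectralValue_le_one_iff (hF.map _)]
    intro n
    rw [coeff_map]
    exact PadicInt.norm_le_one _
  · intro hx
    have halg : IsIntegral ℚ_[p] x := Algebra.IsIntegral.isIntegral x
    have hcoeff : ∀ n, ‖(minpoly ℚ_[p] x).coeff n‖ ≤ 1 :=
      (spectralValue_le_one_iff (minpoly.monic halg)).mp hx
    have hlift : minpoly ℚ_[p] x ∈ lifts (algebraMap ℤ_[p] ℚ_[p]) :=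
      (lifts_iff_coeff_lifts _).mpr fun n => ⟨⟨_, hcoeff n⟩, rfl⟩
    obtain ⟨F, hF, -, hFm⟩ := lifts_and_degree_eq_and_monic hlift (minpoly.monic halg)
    refine ⟨F, hFm, ?_⟩
    rw [← aeval_def, ← aeval_map_algebraMap ℚ_[p], hF, minpoly.aeval]

theorem dvd_iff_norm_le (a b : integralClosure ℤ_[p] (PadicAlgCl p)) :
    a ∣ b ↔ ‖(b : PadicAlgCl p)‖ ≤ ‖(a : PadicAlgCl p)‖ := by
  constructor
  · rintro ⟨c, rfl⟩
    rw [MulMemClass.coe_mul, norm_mul]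
    exact mul_le_of_le_one_right (norm_nonneg _) ((isIntegral_iff_norm_le_one _).mp c.2)
  · intro hab
    by_cases ha : (a : PadicAlgCl p) = 0
    · rw [ha, norm_zero, norm_le_zero_iff] at hab
      exact ⟨0, Subtype.ext (by simp [hab])⟩
    have hc : IsIntegral ℤ_[p] ((b : PadicAlgCl p) / a) := by
      rw [isIntegral_iff_norm_le_one, norm_div]
      exact div_le_one_of_le₀ hab (norm_nonneg _)
    exact ⟨⟨_, hc⟩, Subtype.ext (by rw [MulMemClass.coe_mul, mul_div_cancel₀ _ ha])⟩

theorem not_isUnit_natCast_integralClosure :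
    ¬IsUnit (p : integralClosure ℤ_[p] (PadicAlgCl p)) := by
  rw [isUnit_iff_dvd_one, dvd_iff_norm_le, SubringClass.coe_natCast, OneMemClass.coe_one,
    norm_one, ← map_natCast (algebraMap ℚ_[p] (PadicAlgCl p)), norm_extends, Padic.norm_p,
    not_le]
  exact inv_lt_one_of_one_lt₀ (mod_cast (Fact.out : p.Prime).one_lt)

end PadicAlgCl

namespace PadicIntBar

instance : IsDomain (PadicIntBar p) :=
  inferInstanceAs (IsDomain (integralClosure ℤ_[p] (PadicAlgCl p)))

instance : ValuationRing (PadicIntBar p) :=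
  ValuationRing.iff_dvd_total.mpr ⟨fun a b => (le_total ‖b.1‖ ‖a.1‖).imp
    (PadicAlgCl.dvd_iff_norm_le a b).mpr (PadicAlgCl.dvd_iff_norm_le b a).mpr⟩

instance : IsAlgClosed (ResidueField (PadicIntBar p)) :=
  isAlgClosed_residueField_of_exists_isRoot fun _ => integralClosure.exists_isRoot

theorem not_prime (q : PadicIntBar p) : ¬Prime q :=
  fun hq => hq.irreducible.not_isSquare (integralClosure.isSquare q)

end PadicIntBar

theorem padic_integral_closure_copschinzel (p : ℕ) [Fact p.Prime] :
    -- (i) no prime elements at all, and there are nonzero non-units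
    -- (hence nonzero non-units not divisible by any prime element)
    ((∀ q : PadicIntBar p, ¬ Prime q) ∧
      ∃ a : PadicIntBar p, a ≠ 0 ∧ ¬ IsUnit a ∧
        ∀ q : PadicIntBar p, Prime q → ¬ q ∣ a) ∧
    -- (ii) CopSch(1,1)
    (∀ (ℓ : ℕ), 2 ≤ ℓ → ∀ P : Fin ℓ → Polynomial (PadicIntBar p),
      (∀ i, P i ≠ 0) →
      (∀ d : Polynomial (FractionRing (PadicIntBar p)),
        (∀ i, d ∣ (P i).map (algebraMap (PadicIntBar p) (FractionRing (PadicIntBar p)))) →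
        IsUnit d) →
      (∀ a : PadicIntBar p,
        (∀ m : PadicIntBar p, ∀ i, a ∣ (P i).eval m) → IsUnit a) →
      ∃ m : PadicIntBar p, ∀ d : PadicIntBar p,
        (∀ i, d ∣ (P i).eval m) → IsUnit d) :=
  ⟨⟨PadicIntBar.not_prime, p, NeZero.ne (p : integralClosure ℤ_[p] (PadicAlgCl p)),
      PadicAlgCl.not_isUnit_natCast_integralClosure,
      fun q hq => (PadicIntBar.not_prime q hq).elim⟩,
    fun _ _ P _ _ hP => IsLocalRing.exists_forall_dvd_eval_isUnit P hP⟩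
end

section
/- Let Z be an integral domain and let p, q be non-associate irreducible elements of Z such that the quotient ring Z/(pZ ∩ qZ) is a finite local ring. Then the coprime Schinzel Hypothesis CopSch(1,1) fails for Z: there exist two nonzero polynomials P_1(t), P_2(t) ∈ Z[t], coprime in Q[t] where Q is the fraction field of Z, such that no non-unit of Z divides all values P_1(z), P_2(z) (z ∈ Z), and yet for every m ∈ Z the elements P_1(m) and P_2(m) have a common non-unit divisor in Z. -/
/-!
Let `I = (p) ∩ (q)`. In the finite local ring `Z ⧸ I` non-units are nilpotent and units have
finite order, so a single exponent `e ≠ 0` makes `m ^ e ≡ 0` or `m ^ e ≡ 1 (mod I)` for every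
`m : Z`. Take `P₁ = p q` and `P₂ = p X ^ e + q (1 - X ^ e)`. Then `P₂(m)` is divisible by `q` in
the first case and by `p` in the second, and both divide `P₁`; but `P₂(1) = p` and `P₂(0) = q`
have no common non-unit divisor, and the constant `P₁` is a unit over the fraction field.
-/

open Polynomial

theorem IsLocalRing.exists_pow_eq_zero_or_one (R : Type*) [CommRing R] [IsLocalRing R]
    [Finite R] : ∃ e ≠ 0, ∀ x : R, x ^ e = 0 ∨ x ^ e = 1 := by
  obtain ⟨N, hN⟩ := (isArtinianRing_iff_isNilpotent_maximalIdeal R).mp inferInstance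
  have hc : Nat.card Rˣ ≠ 0 := Nat.card_pos.ne'
  refine ⟨(N + 1) * Nat.card Rˣ, mul_ne_zero N.succ_ne_zero hc, fun x => ?_⟩
  by_cases hx : IsUnit x
  · right
    obtain ⟨u, rfl⟩ := hx
    rw [mul_comm, pow_mul, ← Units.val_pow_eq_pow_val, pow_card_eq_one', Units.val_one, one_pow]
  · left
    have hmem : x ^ (N + 1) ∈ maximalIdeal R ^ (N + 1) :=
      Ideal.pow_mem_pow ((mem_maximalIdeal x).mpr hx) _
    rw [pow_succ, hN, zero_mul, Ideal.zero_eq_bot, Ideal.mem_bot] at hmem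
    rw [pow_mul, hmem, zero_pow hc]

theorem Ideal.exists_pow_mem_or_pow_sub_one_mem {Z : Type*} [CommRing Z] (I : Ideal Z)
    [IsLocalRing (Z ⧸ I)] [Finite (Z ⧸ I)] : ∃ e ≠ 0, ∀ m : Z, m ^ e ∈ I ∨ m ^ e - 1 ∈ I := by
  obtain ⟨e, he, hpow⟩ := IsLocalRing.exists_pow_eq_zero_or_one (Z ⧸ I)
  refine ⟨e, he, fun m => ?_⟩
  rw [← Ideal.Quotient.eq_zero_iff_mem, ← Ideal.Quotient.eq_zero_iff_mem, map_sub, map_pow,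
    map_one, sub_eq_zero]
  exact hpow _

section SwitchPoly

variable {R : Type*} [CommRing R]

noncomputable def switchPoly (p q : R) (e : ℕ) : R[X] :=
  C p * X ^ e + C q * (1 - X ^ e)

variable (p q : R) (e : ℕ)

theorem eval_switchPoly (m : R) : (switchPoly p q e).eval m = p * m ^ e + q * (1 - m ^ e) := by
  simp [switchPoly]

theorem eval_one_switchPoly : (switchPoly p q e).eval 1 = p := by
  simp [eval_switchPoly]

theorem eval_zero_switchPoly (he : e ≠ 0) : (switchPoly p q e).eval 0 = q := by
  simp [eval_switchPoly, zero_pow he]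

theorem switchPoly_ne_zero (hp : p ≠ 0) : switchPoly p q e ≠ 0 := fun h =>
  hp (by rw [← eval_one_switchPoly p q e, h, eval_zero])

theorem dvd_eval_switchPoly_of_dvd_pow {m : R} (h : q ∣ m ^ e) :
    q ∣ (switchPoly p q e).eval m := by
  rw [eval_switchPoly]
  exact dvd_add (h.mul_left p) (dvd_mul_right q _)

theorem dvd_eval_switchPoly_of_dvd_pow_sub_one {m : R} (h : p ∣ m ^ e - 1) :
    p ∣ (switchPoly p q e).eval m := by
  rw [eval_switchPoly, ← neg_sub]
  exact dvd_add (dvd_mul_right p _) ((dvd_neg.mpr h).mul_left q)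

end SwitchPoly

theorem copschinzel_fails_local_quotient
    (Z : Type*) [CommRing Z] [IsDomain Z]
    (p q : Z) (hp : Irreducible p) (hq : Irreducible q)
    (hpq : ¬ Associated p q)
    (hloc : IsLocalRing (Z ⧸ (Ideal.span {p} ⊓ Ideal.span {q})))
    (hfin : Finite (Z ⧸ (Ideal.span {p} ⊓ Ideal.span {q}))) :
    ∃ P₁ P₂ : Polynomial Z, P₁ ≠ 0 ∧ P₂ ≠ 0 ∧
      (∀ d : Polynomial (FractionRing Z),
        d ∣ P₁.map (algebraMap Z (FractionRing Z)) →
        d ∣ P₂.map (algebraMap Z (FractionRing Z)) → IsUnit d) ∧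
      (∀ a : Z, (∀ z : Z, a ∣ P₁.eval z ∧ a ∣ P₂.eval z) → IsUnit a) ∧
      (∀ m : Z, ∃ d : Z, ¬ IsUnit d ∧ d ∣ P₁.eval m ∧ d ∣ P₂.eval m) := by
  obtain ⟨e, he, hpow⟩ := Ideal.exists_pow_mem_or_pow_sub_one_mem (Ideal.span {p} ⊓ Ideal.span {q})
  have hpq0 : p * q ≠ 0 := mul_ne_zero hp.ne_zero hq.ne_zero
  have hrel : IsRelPrime p q :=
    hp.isRelPrime_iff_not_dvd.mpr fun h => hpq (hp.associated_of_dvd hq h)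
  refine ⟨C (p * q), switchPoly p q e, C_ne_zero.mpr hpq0, switchPoly_ne_zero p q e hp.ne_zero,
    fun d hd _ => isUnit_of_dvd_unit hd ?_, fun a ha => ?_, fun m => ?_⟩
  · rw [map_C, isUnit_C, isUnit_iff_ne_zero]
    exact (FaithfulSMul.algebraMap_eq_zero_iff Z (FractionRing Z)).not.mpr hpq0
  · exact hrel (eval_one_switchPoly p q e ▸ (ha 1).2) (eval_zero_switchPoly p q e he ▸ (ha 0).2)
  · simp only [eval_C, Ideal.mem_inf, Ideal.mem_span_singleton] at hpow ⊢
    rcases hpow m with ⟨-, hq_dvd⟩ | ⟨hp_dvd, -⟩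
    · exact ⟨q, hq.not_isUnit, dvd_mul_left q p, dvd_eval_switchPoly_of_dvd_pow p q e hq_dvd⟩
    · exact ⟨p, hp.not_isUnit, dvd_mul_right p q,
        dvd_eval_switchPoly_of_dvd_pow_sub_one p q e hp_dvd⟩
end

section
/- Let R be a finite local commutative ring and let a, b ∈ R be two distinct elements. Then there exists a polynomial f ∈ R[t] such that f(r) = a for every unit r of R, and f(r) = b for every non-unit r of R. -/
open Polynomial

theorem finite_local_ring_two_valued_polynomial
    (R : Type*) [CommRing R] [IsLocalRing R] [Finite R]
    (a b : R) (hab : a ≠ b) :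
    ∃ f : Polynomial R,
      (∀ r : R, IsUnit r → f.eval r = a) ∧
      (∀ r : R, ¬ IsUnit r → f.eval r = b) := by
  classical
  have : Nontrivial R := ⟨a, b, hab⟩
  have := Fintype.ofFinite R
  have hnil : ∀ r : R, ¬ IsUnit r → IsNilpotent r := by
    intro r hr
    obtain ⟨i, j, hij, h⟩ := Finite.exists_ne_map_eq_of_infinite (fun n : ℕ => r ^ n)
    wlog hlt : i < j generalizing i j
    · exact this j i hij.symm h.symm (by omega)
    have hkey : r ^ i * (1 - r ^ (j - i)) = 0 := by
      rw [mul_sub, mul_one, ← pow_add, Nat.add_sub_cancel' hlt.le, h, sub_self]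
    have hu : IsUnit (1 - r ^ (j - i)) := by
      apply IsLocalRing.isUnit_one_sub_self_of_mem_nonunits
      intro hc
      exact hr ((isUnit_pow_iff (Nat.sub_ne_zero_of_lt hlt)).mp hc)
    exact ⟨i, by rwa [hu.mul_left_eq_zero] at hkey⟩
  set k : R → ℕ := fun r => if h : IsUnit r then 0 else (hnil r h).choose with hk
  set N : ℕ := Finset.univ.sup k with hN
  have hNz : ∀ r : R, ¬ IsUnit r → r ^ N = 0 := by
    intro r hr
    apply pow_eq_zero_of_le (Finset.le_sup (Finset.mem_univ r))
    simp only [hk, dif_neg hr]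
    exact (hnil r hr).choose_spec
  set m : ℕ := Nat.card Rˣ with hm
  have hm1 : 1 ≤ m := Nat.card_pos
  refine ⟨C b + C (a - b) * X ^ (m * (N + 1)), ?_, ?_⟩
  · rintro r ⟨u, rfl⟩
    have hu : (u : R) ^ (m * (N + 1)) = 1 := by
      have : (u ^ m : Rˣ) = 1 := pow_card_eq_one'
      calc (u : R) ^ (m * (N + 1)) = (((u ^ m) ^ (N + 1) : Rˣ) : R) := by
            push_cast [← pow_mul]; ring
        _ = 1 := by rw [this, one_pow, Units.val_one]
    simp [hu]
  · intro r hr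
    have : r ^ (m * (N + 1)) = 0 :=
      pow_eq_zero_of_le (le_trans (Nat.le_succ N) (Nat.le_mul_of_pos_left _ (by omega))) (hNz r hr)
    simp [this]
end

section
/- Let Z = ℤ[√5] (the ring of elements a + b√5 with a, b ∈ ℤ). Then the coprime Schinzel Hypothesis CopSch(1,1) fails for Z: there exist two nonzero polynomials P_1(t), P_2(t) ∈ Z[t], coprime in ℚ(√5)[t], such that no non-unit of Z divides all values P_1(z), P_2(z) (z ∈ Z), and yet for every m ∈ Z the elements P_1(m) and P_2(m) have a common non-unit divisor in Z. -/
/-!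
Take `P₁ = t² - √5 t - 2` and `P₂ = P₁ + 2 + 2√5`. They differ by a nonzero constant, so they
are coprime over `ℚ(√5)`. Modulo the index-two prime `𝔭 = (2, 1 + √5)` we have `√5 ≡ 1`, so
`P₁ ≡ t (t - 1)` vanishes on `ℤ[√5] / 𝔭 = 𝔽₂` and every value `P₁(m)` lies in `𝔭`. The ideal
`𝔭` is not principal, but each of its elements is divisible by `2`, `1 + √5` or `3 + √5`, and
these three non-units also divide `2 + 2√5`, hence `P₂(m)`. On the other hand `P₁(0) = -2` and
`P₁(1) = -(1 + √5)` have no common non-unit divisor: `2` is irreducible because norms are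
squares modulo `5`, so none is `±2`, and `2 ∤ 1 + √5`.
-/

open Polynomial Zsqrtd

instance : Nonsquare 5 :=
  ⟨fun n h => by
    have hn : n ≤ 2 := by nlinarith
    interval_cases n <;> omega⟩

-- Mathlib's instance is stated for `ℤ√d` with `d : ℕ` cast to `ℤ`.
instance : IsDomain (ℤ√5) := inferInstanceAs (IsDomain (ℤ√((5 : ℕ) : ℤ)))

theorem Polynomial.isCoprime_self_add_C {K : Type*} [Field K] (p : K[X]) {c : K} (hc : c ≠ 0) :
    IsCoprime p (p + C c) :=
  ⟨-C c⁻¹, C c⁻¹, by rw [mul_add, ← C_mul, inv_mul_cancel₀ hc, C_1]; ring⟩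

namespace Zsqrt5

theorem natAbs_norm_ne_two (z : ℤ√5) : z.norm.natAbs ≠ 2 := by
  intro h
  have hmod : ((z.norm : ℤ) : ZMod 5) = 2 ∨ ((z.norm : ℤ) : ZMod 5) = -2 := by
    rcases Int.natAbs_eq z.norm with h' | h' <;> rw [h', h] <;> simp
  rw [norm_def] at hmod
  push_cast at hmod
  generalize (z.re : ZMod 5) = x at hmod
  generalize (z.im : ZMod 5) = y at hmod
  revert x y
  decide

theorem irreducible_two : Irreducible (2 : ℤ√5) := by
  refine ⟨by rw [← norm_eq_one_iff]; decide, fun a b hab => ?_⟩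
  have hnorm : a.norm.natAbs * b.norm.natAbs = 4 := by
    rw [← Int.natAbs_mul, ← norm_mul, ← hab]; rfl
  have ha4 : a.norm.natAbs ≤ 4 := Nat.le_of_dvd (by norm_num) (Dvd.intro _ hnorm)
  have ha2 := natAbs_norm_ne_two a
  simp only [← norm_eq_one_iff]
  interval_cases a.norm.natAbs <;> omega

theorem not_two_dvd_one_add_sqrtd : ¬ (2 : ℤ√5) ∣ ⟨1, 1⟩ := by
  rw [show (2 : ℤ√5) = ((2 : ℤ) : ℤ√5) from rfl, intCast_dvd]
  decide

theorem isUnit_of_dvd_two_of_dvd_one_add_sqrtd {a : ℤ√5} (h2 : a ∣ 2) (h : a ∣ ⟨1, 1⟩) :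
    IsUnit a := by
  obtain ⟨b, hab⟩ := h2
  refine (irreducible_two.isUnit_or_isUnit hab).resolve_right fun hb => ?_
  exact not_two_dvd_one_add_sqrtd (hab ▸ hb.mul_right_dvd.mpr h)

/-- Reduction modulo the prime `(2, 1 + √5)`. -/
def toZModTwo : ℤ√5 →+* ZMod 2 := lift ⟨1, rfl⟩

theorem toZModTwo_apply (v : ℤ√5) : toZModTwo v = v.re + v.im := by
  simp [toZModTwo]

theorem dvd_of_toZModTwo_eq_zero {v : ℤ√5} (hv : toZModTwo v = 0) :
    2 ∣ v ∨ ⟨1, 1⟩ ∣ v ∨ ⟨3, 1⟩ ∣ v := by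
  rw [toZModTwo_apply, ← Int.cast_add, ZMod.intCast_zmod_eq_zero_iff_dvd] at hv
  rcases Int.emod_two_eq_zero_or_one v.re with h | h
  · left
    rw [show (2 : ℤ√5) = ((2 : ℤ) : ℤ√5) from rfl, intCast_dvd]
    omega
  -- `re` and `im` are odd, so exactly one of `re - im` and `re + im` is divisible by `4`.
  · right
    have h4 : 4 ∣ v.re - v.im ∨ 4 ∣ v.re + v.im := by omega
    rcases h4 with h4 | h4
    · left
      exact ⟨⟨v.im - (v.re - v.im) / 4, (v.re - v.im) / 4⟩,
        by ext <;> simp only [re_mul, im_mul] <;> omega⟩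
    · right
      exact ⟨⟨(3 * v.re - 5 * v.im) / 4, (3 * v.im - v.re) / 4⟩,
        by ext <;> simp only [re_mul, im_mul] <;> omega⟩

theorem exists_not_isUnit_dvd_of_toZModTwo_eq_zero {v : ℤ√5} (hv : toZModTwo v = 0) :
    ∃ d : ℤ√5, ¬ IsUnit d ∧ d ∣ ⟨2, 2⟩ ∧ d ∣ v := by
  rcases dvd_of_toZModTwo_eq_zero hv with h | h | h
  · exact ⟨2, irreducible_two.not_isUnit, ⟨⟨1, 1⟩, by decide⟩, h⟩
  · exact ⟨⟨1, 1⟩, by rw [← norm_eq_one_iff]; decide, ⟨2, by decide⟩, h⟩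
  · exact ⟨⟨3, 1⟩, by rw [← norm_eq_one_iff]; decide, ⟨⟨-1, 1⟩, by decide⟩, h⟩

noncomputable def schinzelPoly : (ℤ√5)[X] := X ^ 2 - C sqrtd * X - 2

theorem toZModTwo_eval_schinzelPoly (m : ℤ√5) : toZModTwo (schinzelPoly.eval m) = 0 := by
  simp only [schinzelPoly, eval_sub, eval_pow, eval_mul, eval_C, eval_X, eval_ofNat, map_sub,
    map_pow, map_mul, map_ofNat]
  rw [toZModTwo_apply sqrtd]
  generalize toZModTwo m = x
  revert x
  decide

theorem schinzelPoly_monic : schinzelPoly.Monic := by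
  unfold schinzelPoly; monicity!

theorem schinzelPoly_add_C_monic (c : ℤ√5) : (schinzelPoly + C c).Monic := by
  unfold schinzelPoly; monicity!

theorem eval_zero_schinzelPoly : schinzelPoly.eval 0 = -2 := by
  simp [schinzelPoly]

theorem eval_one_schinzelPoly : schinzelPoly.eval 1 = -⟨1, 1⟩ := by
  simp only [schinzelPoly, eval_sub, eval_pow, eval_mul, eval_C, eval_X, eval_ofNat, one_pow,
    mul_one]
  decide

end Zsqrt5

open Zsqrt5 in
theorem copschinzel_fails_Zsqrt5 :
    ∃ P₁ P₂ : Polynomial (ℤ√5), P₁ ≠ 0 ∧ P₂ ≠ 0 ∧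
      (∀ d : Polynomial (FractionRing (ℤ√5)),
        d ∣ P₁.map (algebraMap (ℤ√5) (FractionRing (ℤ√5))) →
        d ∣ P₂.map (algebraMap (ℤ√5) (FractionRing (ℤ√5))) → IsUnit d) ∧
      (∀ a : ℤ√5, (∀ z : ℤ√5, a ∣ P₁.eval z ∧ a ∣ P₂.eval z) → IsUnit a) ∧
      (∀ m : ℤ√5, ∃ d : ℤ√5, ¬ IsUnit d ∧ d ∣ P₁.eval m ∧ d ∣ P₂.eval m) := by
  refine ⟨schinzelPoly, schinzelPoly + C ⟨2, 2⟩, schinzelPoly_monic.ne_zero,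
    (schinzelPoly_add_C_monic _).ne_zero, fun d h₁ h₂ => ?_, fun a ha => ?_, fun m => ?_⟩
  · rw [Polynomial.map_add, map_C] at h₂
    have hc : algebraMap (ℤ√5) (FractionRing (ℤ√5)) ⟨2, 2⟩ ≠ 0 :=
      (IsFractionRing.to_map_ne_zero_of_mem_nonZeroDivisors
        (mem_nonZeroDivisors_of_ne_zero (by decide)))
    exact (isCoprime_self_add_C _ hc).isUnit_of_dvd' h₁ h₂
  · refine isUnit_of_dvd_two_of_dvd_one_add_sqrtd ?_ ?_
    · simpa [eval_zero_schinzelPoly] using (ha 0).1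
    · simpa [eval_one_schinzelPoly] using (ha 1).1
  · obtain ⟨d, hd, hdc, hdv⟩ :=
      exists_not_isUnit_dvd_of_toZModTwo_eq_zero (toZModTwo_eval_schinzelPoly m)
    exact ⟨d, hd, hdv, by rw [eval_add, eval_C]; exact dvd_add hdv hdc⟩
end

section
/- Let Z be a principal ideal domain with fraction field Q, and let P_1(t),…,P_ℓ(t) ∈ Z[t] be ℓ ≥ 2 nonzero polynomials that are coprime in Q[t]. Then the set D of ideals of Z given by D = { the ideal of Z generated by P_1(m),…,P_ℓ(m) : m ∈ Z } is finite and is closed under ideal sum, i.e., for any m, m' ∈ Z there exists m'' ∈ Z such that the ideal generated by P_1(m''),…,P_ℓ(m'') equals the sum of the ideals generated by P_1(m),…,P_ℓ(m) and by P_1(m'),…,P_ℓ(m'). -/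
/-!
Bezout's identity in `K[t]`, after clearing denominators, gives `c ≠ 0` in `Z` with
`c ∈ I(m) := (P_1(m), …, P_ℓ(m))` for every `m`; so every `I(m)` is one of the finitely many
divisors of `(c)`. Since `I(m) + W` depends only on `m mod W`, the sum `I(m) + I(m')` is
realised as follows: split `(c) = U V` into coprime factors, `U` collecting the primes at which
`I(m)` has the smaller valuation; take `m'' ≡ m mod U` and `m'' ≡ m' mod V` by the Chinese
remainder theorem; an ideal containing `U V` is determined by its sums with `U` and with `V`.
-/

open Polynomial UniqueFactorizationMonoid Multiset

namespace Ideal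

section CommRing

variable {R : Type*} [CommRing R]

theorem span_range_eq_top_of_forall_dvd_isUnit_s11 {ι : Type*} [IsPrincipalIdealRing R] {f : ι → R}
    (h : ∀ d, (∀ i, d ∣ f i) → IsUnit d) : span (Set.range f) = ⊤ := by
  set I := span (Set.range f)
  have hdvd : ∀ i, Submodule.IsPrincipal.generator I ∣ f i := fun i =>
    (Submodule.IsPrincipal.mem_iff_generator_dvd I).1 (subset_span ⟨i, rfl⟩)
  rw [← span_singleton_generator I, span_singleton_eq_top]
  exact h _ hdvd

theorem sup_inf_sup_eq_of_sup_eq_top {J U V : Ideal R} (hUV : U ⊔ V = ⊤) (hJ : U * V ≤ J) :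
    (J ⊔ U) ⊓ (J ⊔ V) = J := by
  refine le_antisymm ?_ (le_inf le_sup_left le_sup_left)
  have hcop : (J ⊔ U) ⊔ (J ⊔ V) = ⊤ := eq_top_mono (sup_le_sup le_sup_right le_sup_right) hUV
  rw [← mul_eq_inf_of_coprime hcop, sup_mul, mul_sup, mul_sup]
  exact sup_le (sup_le mul_le_left mul_le_left) (sup_le mul_le_right hJ)

theorem exists_sub_mem_sub_mem_of_sup_eq_top {U V : Ideal R} (hUV : U ⊔ V = ⊤) (x y : R) :
    ∃ r, r - x ∈ U ∧ r - y ∈ V := by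
  obtain ⟨u, hu, v, hv, huv⟩ := Submodule.mem_sup.1 (hUV ▸ Submodule.mem_top : (1 : R) ∈ U ⊔ V)
  refine ⟨y * u + x * v, ?_, ?_⟩
  · rw [show y * u + x * v - x = (y - x) * u by linear_combination x * huv]
    exact U.mul_mem_left _ hu
  · rw [show y * u + x * v - y = (x - y) * v by linear_combination y * huv]
    exact V.mul_mem_left _ hv

end CommRing

section DedekindDomain

variable {R : Type*} [CommRing R] [IsDedekindDomain R]

theorem finite_setOf_le {C : Ideal R} (hC : C ≠ ⊥) : {J : Ideal R | C ≤ J}.Finite := by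
  have := fintypeSubtypeDvd C hC
  have hdvd : {J : Ideal R | J ∣ C}.Finite := Set.finite_coe_iff.1 (Finite.of_fintype {J // J ∣ C})
  exact hdvd.subset fun _ => dvd_iff_le.2

theorem count_normalizedFactors_sup {I J : Ideal R} (hI : I ≠ ⊥) (hJ : J ≠ ⊥) (p : Ideal R) :
    count p (normalizedFactors (I ⊔ J)) =
      min (count p (normalizedFactors I)) (count p (normalizedFactors J)) := by
  classical
  rw [sup_eq_prod_inf_factors hI hJ, normalizedFactors_prod_inter_eq_inter, count_inter]

theorem exists_sup_eq_top_mul_eq_and_le_sup {A B C : Ideal R} (hA : A ≠ ⊥) (hB : B ≠ ⊥)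
    (hC : C ≠ ⊥) : ∃ U V : Ideal R, U ⊔ V = ⊤ ∧ U * V = C ∧ B ≤ A ⊔ U ∧ A ≤ B ⊔ V := by
  classical
  set below : Ideal R → Prop :=
    fun p => count p (normalizedFactors A) ≤ count p (normalizedFactors B)
  set U := ((normalizedFactors C).filter below).prod
  set V := ((normalizedFactors C).filter (¬ below ·)).prod
  have hnfU : normalizedFactors U = (normalizedFactors C).filter below :=
    normalizedFactors_prod_eq_self_of_subset (filter_subset _ _)
  have hnfV : normalizedFactors V = (normalizedFactors C).filter (¬ below ·) :=
    normalizedFactors_prod_eq_self_of_subset (filter_subset _ _)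
  have hUV : U * V = C := by
    rw [← prod_add, filter_add_not, prod_normalizedFactors_eq_self hC]
  have hU : U ≠ ⊥ := left_ne_zero_of_mul (hUV ▸ hC : U * V ≠ 0)
  have hV : V ≠ ⊥ := right_ne_zero_of_mul (hUV ▸ hC : U * V ≠ 0)
  refine ⟨U, V, ?_, hUV, ?_, ?_⟩
  · rw [sup_eq_prod_inf_factors hU hV, hnfU, hnfV, ← one_eq_top, ← prod_zero]
    congr 1
    refine eq_zero_of_forall_notMem fun p hp => ?_
    rw [mem_inter, mem_filter, mem_filter] at hp
    exact hp.2.2 hp.1.2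
  · rw [← dvd_iff_le, dvd_iff_normalizedFactors_le_normalizedFactors
      (ne_bot_of_le_ne_bot hA le_sup_left) hB, le_iff_count]
    intro p
    rw [count_normalizedFactors_sup hA hU, hnfU, count_filter]
    split_ifs with hp <;> omega
  · rw [← dvd_iff_le, dvd_iff_normalizedFactors_le_normalizedFactors
      (ne_bot_of_le_ne_bot hB le_sup_left) hA, le_iff_count]
    intro p
    rw [count_normalizedFactors_sup hB hV, hnfV, count_filter]
    split_ifs with hp <;> omega

end DedekindDomain

end Ideal

namespace Polynomial

attribute [local instance] Polynomial.algebra Polynomial.isLocalization in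
theorem exists_C_mem_of_map_eq_top {R S : Type*} [CommRing R] [CommRing S]
    [Algebra R S] (M : Submonoid R) [IsLocalization M S] {I : Ideal R[X]}
    (h : I.map (mapRingHom (algebraMap R S)) = ⊤) : ∃ c ∈ M, C c ∈ I := by
  obtain ⟨_, ⟨c, hc, rfl⟩, hcI⟩ := Set.not_disjoint_iff.1
    (mt (IsLocalization.map_algebraMap_ne_top_iff_disjoint (M.map C) S[X] I).2 (not_not.2 h))
  exact ⟨c, hc, hcI⟩

theorem exists_C_mem_span_of_coprime_map {R K ι : Type*} [CommRing R] [Field K]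
    [Algebra R K] [IsFractionRing R K] (P : ι → R[X])
    (hcop : ∀ d : K[X], (∀ i, d ∣ (P i).map (algebraMap R K)) → IsUnit d) :
    ∃ c ∈ nonZeroDivisors R, C c ∈ Ideal.span (Set.range P) := by
  refine exists_C_mem_of_map_eq_top _ (S := K) ?_
  rw [Ideal.map_span, ← Set.range_comp]
  exact Ideal.span_range_eq_top_of_forall_dvd_isUnit_s11 hcop

section spanEval

variable {R ι : Type*} [CommRing R]

def spanEval (P : ι → R[X]) (m : R) : Ideal R := Ideal.span (Set.range fun i => (P i).eval m)

theorem spanEval_le_sup_of_sub_mem (P : ι → R[X]) {W : Ideal R} {x y : R} (h : x - y ∈ W) :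
    spanEval P x ≤ spanEval P y ⊔ W := by
  refine Ideal.span_le.2 ?_
  rintro _ ⟨i, rfl⟩
  show (P i).eval x ∈ _
  have hdiff : (P i).eval x - (P i).eval y ∈ W :=
    Ideal.mem_of_dvd _ (sub_dvd_eval_sub x y (P i)) h
  rw [← add_sub_cancel ((P i).eval y) ((P i).eval x)]
  exact add_mem (Ideal.mem_sup_left (Ideal.subset_span ⟨i, rfl⟩)) (Ideal.mem_sup_right hdiff)

theorem spanEval_sup_eq_of_sub_mem (P : ι → R[X]) {W : Ideal R} {x y : R} (h : x - y ∈ W) :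
    spanEval P x ⊔ W = spanEval P y ⊔ W :=
  le_antisymm (sup_le (spanEval_le_sup_of_sub_mem P h) le_sup_right)
    (sup_le (spanEval_le_sup_of_sub_mem P (by rwa [← neg_mem_iff, neg_sub])) le_sup_right)

theorem mem_spanEval_of_C_mem_span {P : ι → R[X]} {c : R} (h : C c ∈ Ideal.span (Set.range P))
    (m : R) : c ∈ spanEval P m := by
  have hmap := Ideal.mem_map_of_mem (evalRingHom m) h
  rwa [Ideal.map_span, ← Set.range_comp, coe_evalRingHom, eval_C] at hmap

end spanEval

end Polynomial

theorem gcd_set_finite_stable_PID_general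
    (Z : Type*) [CommRing Z] [IsDomain Z] [IsPrincipalIdealRing Z]
    (ℓ : ℕ)
    (P : Fin ℓ → Polynomial Z)
    (hcop : ∀ d : Polynomial (FractionRing Z),
      (∀ i, d ∣ (P i).map (algebraMap Z (FractionRing Z))) → IsUnit d) :
    Set.Finite {I : Ideal Z | ∃ m : Z,
        I = Ideal.span (Set.range fun i => (P i).eval m)} ∧
    ∀ m m' : Z, ∃ m'' : Z,
      Ideal.span (Set.range fun i => (P i).eval m'') =
        Ideal.span (Set.range fun i => (P i).eval m) ⊔
          Ideal.span (Set.range fun i => (P i).eval m') := by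
  obtain ⟨c, hc, hcP⟩ := exists_C_mem_span_of_coprime_map P hcop
  set Ic := Ideal.span {c}
  have hIc : Ic ≠ ⊥ := by simpa [Ic] using nonZeroDivisors.ne_zero hc
  have hIc_le : ∀ m, Ic ≤ spanEval P m := fun m =>
    (Ideal.span_singleton_le_iff_mem _).2 (mem_spanEval_of_C_mem_span hcP m)
  have hspan_ne_bot : ∀ m, spanEval P m ≠ ⊥ := fun m => ne_bot_of_le_ne_bot hIc (hIc_le m)
  refine ⟨(Ideal.finite_setOf_le hIc).subset ?_, fun m m' => ?_⟩
  · rintro _ ⟨m, rfl⟩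
    exact hIc_le m
  obtain ⟨U, V, hUV, hUVC, hU, hV⟩ :=
    Ideal.exists_sup_eq_top_mul_eq_and_le_sup (hspan_ne_bot m) (hspan_ne_bot m') hIc
  obtain ⟨m'', hm, hm'⟩ := Ideal.exists_sub_mem_sub_mem_of_sup_eq_top hUV m m'
  refine ⟨m'', ?_⟩
  calc spanEval P m''
      = (spanEval P m'' ⊔ U) ⊓ (spanEval P m'' ⊔ V) :=
        (Ideal.sup_inf_sup_eq_of_sup_eq_top hUV (hUVC ▸ hIc_le m'')).symm
    _ = (spanEval P m ⊔ U) ⊓ (spanEval P m' ⊔ V) := by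
        rw [spanEval_sup_eq_of_sub_mem P hm, spanEval_sup_eq_of_sub_mem P hm']
    _ = (spanEval P m ⊔ spanEval P m' ⊔ U) ⊓ (spanEval P m ⊔ spanEval P m' ⊔ V) := by
        congr 1
        · rw [sup_right_comm, sup_eq_left.2 hU]
        · rw [sup_comm (spanEval P m), sup_right_comm, sup_eq_left.2 hV]
    _ = spanEval P m ⊔ spanEval P m' :=
        Ideal.sup_inf_sup_eq_of_sup_eq_top hUV (hUVC ▸ le_sup_of_le_left (hIc_le m))

theorem gcd_set_finite_stable_PID
    (Z : Type*) [CommRing Z] [IsDomain Z] [IsPrincipalIdealRing Z]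
    (ℓ : ℕ) (hℓ : 2 ≤ ℓ)
    (P : Fin ℓ → Polynomial Z)
    (hne : ∀ i, P i ≠ 0)
    (hcop : ∀ d : Polynomial (FractionRing Z),
      (∀ i, d ∣ (P i).map (algebraMap Z (FractionRing Z))) → IsUnit d) :
    Set.Finite {I : Ideal Z | ∃ m : Z,
        I = Ideal.span (Set.range fun i => (P i).eval m)} ∧
    ∀ m m' : Z, ∃ m'' : Z,
      Ideal.span (Set.range fun i => (P i).eval m'') =
        Ideal.span (Set.range fun i => (P i).eval m) ⊔
          Ideal.span (Set.range fun i => (P i).eval m') :=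
  gcd_set_finite_stable_PID_general Z ℓ P hcop
end

section
/- Let Z = ℤ[x,y,z] be the polynomial ring in three variables over ℤ, and consider the polynomials in Z[t]: P_1(t) = (x²y²z + t²)(x²yz² + (t−1)²) and P_2(t) = (xy²z² + t²)(x²y²z² + (t−1)²). Then P_1 and P_2 are nonzero and coprime in ℚ(x,y,z)[t]; the element xy²z is a gcd in Z of P_1(0) and P_2(0); the element x²yz² is a gcd in Z of P_1(1) and P_2(1); the element xyz is a gcd in Z of xy²z and x²yz²; and yet there is no m ∈ Z such that xyz is a gcd in Z of P_1(m) and P_2(m) (i.e., no m ∈ Z such that xyz divides both P_1(m) and P_2(m) and every common divisor of P_1(m) and P_2(m) divides xyz). In particular, the set { gcd(P_1(m), P_2(m)) : m ∈ Z } is not stable under gcd. -/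
/-!
At `t = 0` and `t = 1` one factor of each `Pᵢ` becomes a monomial and the other is `≡ 1` modulo
every variable. The two remaining cofactors differ by a monomial times the prime `y - 1`
(resp. `z - x`), which divides neither of them, so the gcds are the stated monomials.

If `xyz` were a gcd of `P₁(m)` and `P₂(m)`, then `x ∣ P₁(m)` forces `x ∣ m` (were `x ∣ m - 1`,
`x²` would be a common divisor), and in the same way `y ∣ m - 1`; comparing constant terms
of `m` and `m - 1` gives a contradiction.

Over the fraction field, `P₁` and `P₂` are products of monic quadratics in `t` that are
pairwise coprime: two of them differ by a nonzero constant, the others have nonzero resultant.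
-/

open MvPolynomial Polynomial

namespace GcdCounterexample

noncomputable abbrev Z3 : Type := MvPolynomial (Fin 3) ℤ

noncomputable def x : Z3 := MvPolynomial.X 0
noncomputable def y : Z3 := MvPolynomial.X 1
noncomputable def z : Z3 := MvPolynomial.X 2

noncomputable def P₁ : Polynomial Z3 :=
  (Polynomial.C (x ^ 2 * y ^ 2 * z) + Polynomial.X ^ 2) *
    (Polynomial.C (x ^ 2 * y * z ^ 2) + (Polynomial.X - 1) ^ 2)

noncomputable def P₂ : Polynomial Z3 :=
  (Polynomial.C (x * y ^ 2 * z ^ 2) + Polynomial.X ^ 2) *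
    (Polynomial.C (x ^ 2 * y ^ 2 * z ^ 2) + (Polynomial.X - 1) ^ 2)

/-- `d` is a gcd of `a` and `b`. -/
def IsGcdOf (d a b : Z3) : Prop :=
  d ∣ a ∧ d ∣ b ∧ ∀ e : Z3, e ∣ a → e ∣ b → e ∣ d

end GcdCounterexample

namespace MvPolynomial

variable {R σ : Type*} [CommRing R]

section Shear

variable [DecidableEq σ]

noncomputable def shear (i : σ) (p : MvPolynomial σ R) :
    MvPolynomial σ R →ₐ[R] MvPolynomial σ R :=
  aeval (Function.update X i (X i + p))

theorem shear_X_self (i : σ) (p : MvPolynomial σ R) : shear i p (X i) = X i + p := by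
  simp [shear]

theorem shear_of_notMem_vars {i : σ} {p q : MvPolynomial σ R} (hq : i ∉ q.vars) :
    shear i p q = q := by
  change (shear i p).toRingHom q = RingHom.id _ q
  refine hom_congr_vars (by ext; simp [shear]) (fun j hj _ => ?_) rfl
  have hji : j ≠ i := fun h => hq (h ▸ hj)
  simp [shear, Function.update_of_ne hji]

theorem shear_comp_shear_neg {i : σ} {p : MvPolynomial σ R} (hp : i ∉ p.vars) :
    (shear i p).comp (shear i (-p)) = AlgHom.id R _ := by
  refine algHom_ext fun j => ?_
  obtain rfl | hji := eq_or_ne j i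
  · simp [shear_X_self, shear_of_notMem_vars hp]
  · simp [shear, Function.update_of_ne hji]

noncomputable def shearEquiv {i : σ} {p : MvPolynomial σ R} (hp : i ∉ p.vars) :
    MvPolynomial σ R ≃ₐ[R] MvPolynomial σ R :=
  AlgEquiv.ofAlgHom (shear i p) (shear i (-p)) (shear_comp_shear_neg hp)
    (by simpa using shear_comp_shear_neg (p := -p) (by rwa [vars_neg]))

end Shear

theorem prime_X_add [IsDomain R] {i : σ} {p : MvPolynomial σ R} (hp : i ∉ p.vars) :
    Prime (X i + p) := by
  classical
  rw [← shear_X_self]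
  exact (MulEquiv.prime_iff (shearEquiv hp)).mpr X_prime

theorem isRelPrime_X_X [IsDomain R] {i j : σ} (h : i ≠ j) :
    IsRelPrime (X i : MvPolynomial σ R) (X j) :=
  X_prime.irreducible.isRelPrime_iff_not_dvd.mpr (by simpa using h)

end MvPolynomial

theorem not_dvd_of_map_eq_zero {R S F : Type*} [CommMonoidWithZero R] [CommMonoidWithZero S]
    [FunLike F R S] [MonoidWithZeroHomClass F R S] (f : F) {a b : R} (ha : f a = 0)
    (hb : f b ≠ 0) : ¬ a ∣ b :=
  fun h => hb (zero_dvd_iff.mp (ha ▸ map_dvd f h))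

section RelPrime

variable {R : Type*} [CommRing R]

theorem isRelPrime_of_dvd_sub_one {a b : R} (h : a ∣ b - 1) : IsRelPrime a b := by
  obtain ⟨c, hc⟩ := h
  exact IsCoprime.isRelPrime ⟨-c, 1, by linear_combination hc⟩

theorem isRelPrime_of_sub_eq_mul_prime [IsDomain R] [DecompositionMonoid R] {u v m q : R}
    (hq : Prime q) (hqu : ¬ q ∣ u) (hum : IsRelPrime u m) (h : v - u = m * q) : IsRelPrime u v := by
  have huq : IsRelPrime u q := (hq.irreducible.isRelPrime_iff_not_dvd.mpr hqu).symm
  rw [show v = m * q + u * 1 by linear_combination h]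
  exact (hum.mul_right huq).add_mul_left_right 1

theorem IsRelPrime.dvd_of_dvd_mul_of_dvd_mul {R : Type*} [CommMonoidWithZero R]
    [IsCancelMulZero R] [DecompositionMonoid R] {d a b e : R} (hab : IsRelPrime a b)
    (ha : e ∣ d * a) (hb : e ∣ d * b) : e ∣ d := by
  obtain ⟨e₁, e₂, ⟨d', rfl⟩, he₂, rfl⟩ := exists_dvd_and_dvd_of_dvd_mul ha
  obtain rfl | he₁ := eq_or_ne e₁ 0
  · simp
  rw [mul_assoc, mul_dvd_mul_iff_left he₁] at hb
  exact mul_dvd_mul_left e₁ ((hab.of_dvd_left he₂).dvd_of_dvd_mul_right hb)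

theorem Prime.dvd_or_dvd_of_dvd_add_sq_mul_add_sq {p A B a b : R} (hp : Prime p) (hA : p ∣ A)
    (hB : p ∣ B) (h : p ∣ (A + a ^ 2) * (B + b ^ 2)) : p ∣ a ∨ p ∣ b :=
  (hp.dvd_or_dvd h).imp (fun h => hp.dvd_of_dvd_pow ((dvd_add_right hA).mp h))
    (fun h => hp.dvd_of_dvd_pow ((dvd_add_right hB).mp h))

end RelPrime

section Quadratics

variable {K : Type*} [Field K]

theorem isCoprime_C_add_C_add {a b : K} (h : a ≠ b) (p : K[X]) :
    IsCoprime (Polynomial.C a + p) (Polynomial.C b + p) := by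
  have hinv : Polynomial.C (a - b)⁻¹ * (Polynomial.C a - Polynomial.C b) = 1 := by
    rw [← Polynomial.C_sub, ← Polynomial.C_mul, inv_mul_cancel₀ (sub_ne_zero.mpr h),
      Polynomial.C_1]
  exact ⟨Polynomial.C (a - b)⁻¹, -Polynomial.C (a - b)⁻¹, by linear_combination hinv⟩

theorem isCoprime_C_add_X_sq_C_add_X_sub_one_sq {a b : K} (h : 4 * a + (1 + b - a) ^ 2 ≠ 0) :
    IsCoprime (Polynomial.C a + Polynomial.X ^ 2) (Polynomial.C b + (Polynomial.X - 1) ^ 2) := by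
  set r := 4 * a + (1 + b - a) ^ 2
  -- a Bézout identity whose right-hand side is the resultant `r`
  have bezout :
      (Polynomial.C (3 + a - b) - 2 * Polynomial.X) * (Polynomial.C a + Polynomial.X ^ 2)
      + (2 * Polynomial.X + Polynomial.C (1 + b - a)) * (Polynomial.C b + (Polynomial.X - 1) ^ 2)
      = Polynomial.C r := by
    simp only [r, Polynomial.C_add, Polynomial.C_sub, Polynomial.C_mul, Polynomial.C_pow,
      Polynomial.C_1, Polynomial.C_ofNat]
    ring
  have hinv : Polynomial.C r⁻¹ * Polynomial.C r = 1 := by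
    rw [← Polynomial.C_mul, inv_mul_cancel₀ h, Polynomial.C_1]
  exact ⟨Polynomial.C r⁻¹ * (Polynomial.C (3 + a - b) - 2 * Polynomial.X),
    Polynomial.C r⁻¹ * (2 * Polynomial.X + Polynomial.C (1 + b - a)),
    by linear_combination Polynomial.C r⁻¹ * bezout + hinv⟩

theorem isCoprime_map_quadratics {R : Type*} [CommRing R] {φ : R →+* K}
    (hφ : Function.Injective φ) {a b a' b' : R} (ha : a ≠ a') (hb : b ≠ b')
    (h₁ : 4 * a + (1 + b' - a) ^ 2 ≠ 0) (h₂ : 4 * a' + (1 + b - a') ^ 2 ≠ 0) :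
    IsCoprime
      (((Polynomial.C a + Polynomial.X ^ 2) * (Polynomial.C b + (Polynomial.X - 1) ^ 2)).map φ)
      (((Polynomial.C a' + Polynomial.X ^ 2) * (Polynomial.C b' + (Polynomial.X - 1) ^ 2)).map
        φ) := by
  have hφ₁ : 4 * φ a + (1 + φ b' - φ a) ^ 2 ≠ 0 := by
    simpa [map_ofNat] using (map_ne_zero_iff φ hφ).mpr h₁
  have hφ₂ : 4 * φ a' + (1 + φ b - φ a') ^ 2 ≠ 0 := by
    simpa [map_ofNat] using (map_ne_zero_iff φ hφ).mpr h₂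
  simp only [Polynomial.map_mul, Polynomial.map_add, Polynomial.map_pow, Polynomial.map_sub,
    Polynomial.map_C, Polynomial.map_X, Polynomial.map_one]
  exact ((isCoprime_C_add_C_add (hφ.ne ha) _).mul_right
      (isCoprime_C_add_X_sq_C_add_X_sub_one_sq hφ₁)).mul_left
    ((isCoprime_C_add_X_sq_C_add_X_sub_one_sq hφ₂).symm.mul_right
      (isCoprime_C_add_C_add (hφ.ne hb) _))

end Quadratics

namespace GcdCounterexample

theorem isGcdOf_mul_mul {d a b : Z3} (h : IsRelPrime a b) : IsGcdOf d (d * a) (d * b) :=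
  ⟨dvd_mul_right d a, dvd_mul_right d b,
    fun _ ha hb => h.dvd_of_dvd_mul_of_dvd_mul ha hb⟩

theorem P₁_monic : P₁.Monic := by
  unfold P₁; monicity!

theorem P₂_monic : P₂.Monic := by
  unfold P₂; monicity!

theorem eval_P₁ (m : Z3) :
    P₁.eval m = (x ^ 2 * y ^ 2 * z + m ^ 2) * (x ^ 2 * y * z ^ 2 + (m - 1) ^ 2) := by
  simp [P₁]

theorem eval_P₂ (m : Z3) :
    P₂.eval m = (x * y ^ 2 * z ^ 2 + m ^ 2) * (x ^ 2 * y ^ 2 * z ^ 2 + (m - 1) ^ 2) := by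
  simp [P₂]

theorem isCoprime_map_P₁_P₂ :
    IsCoprime (P₁.map (algebraMap Z3 (FractionRing Z3)))
      (P₂.map (algebraMap Z3 (FractionRing Z3))) := by
  refine isCoprime_map_quadratics (IsFractionRing.injective Z3 (FractionRing Z3)) ?_ ?_ ?_ ?_
  · exact fun h => by simpa [x, y, z] using congrArg (MvPolynomial.eval ![2, 1, 1]) h
  · exact fun h => by simpa [x, y, z] using congrArg (MvPolynomial.eval ![1, 2, 1]) h
  · exact fun h => by simpa [x, y, z] using congrArg MvPolynomial.constantCoeff h
  · exact fun h => by simpa [x, y, z] using congrArg MvPolynomial.constantCoeff h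

theorem prime_y_sub_one : Prime (y - 1) := by
  rw [sub_eq_add_neg]
  exact prime_X_add (by simp)

theorem prime_z_sub_x : Prime (z - x) := by
  rw [sub_eq_add_neg]
  exact prime_X_add (by simp [x])

theorem isGcdOf_eval_zero : IsGcdOf (x * y ^ 2 * z) (P₁.eval 0) (P₂.eval 0) := by
  have h₁ : P₁.eval 0 = x * y ^ 2 * z * (x * (x ^ 2 * y * z ^ 2 + 1)) := by
    rw [eval_P₁]; ring
  have h₂ : P₂.eval 0 = x * y ^ 2 * z * (z * (x ^ 2 * y ^ 2 * z ^ 2 + 1)) := by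
    rw [eval_P₂]; ring
  rw [h₁, h₂]
  refine isGcdOf_mul_mul (IsRelPrime.mul_left (.mul_right ?_ ?_) (.mul_right ?_ ?_))
  · exact isRelPrime_X_X (by decide)
  · exact isRelPrime_of_dvd_sub_one ⟨x * y ^ 2 * z ^ 2, by ring⟩
  · exact (isRelPrime_of_dvd_sub_one ⟨x ^ 2 * y * z, by ring⟩).symm
  · refine isRelPrime_of_sub_eq_mul_prime (m := x ^ 2 * y * z ^ 2) prime_y_sub_one ?_
      (isRelPrime_of_dvd_sub_one ⟨1, by ring⟩).symm (by ring)
    exact not_dvd_of_map_eq_zero (MvPolynomial.eval 1) (by simp [y]) (by simp [x, y, z])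

theorem isGcdOf_eval_one : IsGcdOf (x ^ 2 * y * z ^ 2) (P₁.eval 1) (P₂.eval 1) := by
  have h₁ : P₁.eval 1 = x ^ 2 * y * z ^ 2 * (x ^ 2 * y ^ 2 * z + 1) := by rw [eval_P₁]; ring
  have h₂ : P₂.eval 1 = x ^ 2 * y * z ^ 2 * (y * (x * y ^ 2 * z ^ 2 + 1)) := by
    rw [eval_P₂]; ring
  rw [h₁, h₂]
  refine isGcdOf_mul_mul (.mul_right ?_ ?_)
  · exact (isRelPrime_of_dvd_sub_one ⟨x ^ 2 * y * z, by ring⟩).symm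
  · refine isRelPrime_of_sub_eq_mul_prime (m := x * y ^ 2 * z) prime_z_sub_x ?_
      (isRelPrime_of_dvd_sub_one ⟨x, by ring⟩).symm (by ring)
    exact not_dvd_of_map_eq_zero (MvPolynomial.eval 1) (by simp [x, z]) (by simp [x, y, z])

theorem isGcdOf_xyz : IsGcdOf (x * y * z) (x * y ^ 2 * z) (x ^ 2 * y * z ^ 2) := by
  have h₁ : x * y ^ 2 * z = x * y * z * y := by ring
  have h₂ : x ^ 2 * y * z ^ 2 = x * y * z * (x * z) := by ring
  rw [h₁, h₂]
  exact isGcdOf_mul_mul ((isRelPrime_X_X (by decide)).mul_right (isRelPrime_X_X (by decide)))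

theorem dvd_of_isGcdOf_of_not_sq_dvd {p d A₁ B₁ A₂ B₂ a b : Z3} (hp : Prime p) (hpd : p ∣ d)
    (hd : ¬ p ^ 2 ∣ d) (hA₁ : p ∣ A₁) (hB₁ : p ^ 2 ∣ B₁) (hB₂ : p ^ 2 ∣ B₂)
    (h : IsGcdOf d ((A₁ + a ^ 2) * (B₁ + b ^ 2)) ((A₂ + a ^ 2) * (B₂ + b ^ 2))) : p ∣ a := by
  refine (hp.dvd_or_dvd_of_dvd_add_sq_mul_add_sq hA₁ ((dvd_pow_self p two_ne_zero).trans hB₁)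
    (hpd.trans h.1)).resolve_right fun hb => hd (h.2.2 _ ?_ ?_)
  · exact dvd_mul_of_dvd_right (dvd_add hB₁ (pow_dvd_pow_of_dvd hb 2)) _
  · exact dvd_mul_of_dvd_right (dvd_add hB₂ (pow_dvd_pow_of_dvd hb 2)) _

theorem not_X_sq_dvd_xyz (i : Fin 3) : ¬ (MvPolynomial.X i : Z3) ^ 2 ∣ x * y * z := by
  rw [x, y, z, MvPolynomial.X_pow_eq_monomial]
  simp only [MvPolynomial.X, monomial_mul, one_mul, monomial_one_dvd_monomial_one,
    Finsupp.le_def, not_forall]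
  exact ⟨i, by fin_cases i <;> simp⟩

theorem x_dvd_of_isGcdOf {m : Z3} (h : IsGcdOf (x * y * z) (P₁.eval m) (P₂.eval m)) : x ∣ m := by
  rw [eval_P₁, eval_P₂] at h
  exact dvd_of_isGcdOf_of_not_sq_dvd X_prime ⟨y * z, by ring⟩ (not_X_sq_dvd_xyz 0)
    ⟨x * y ^ 2 * z, by ring⟩ ⟨y * z ^ 2, by ring⟩ ⟨y ^ 2 * z ^ 2, by ring⟩ h

theorem y_dvd_sub_one_of_isGcdOf {m : Z3} (h : IsGcdOf (x * y * z) (P₁.eval m) (P₂.eval m)) :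
    y ∣ m - 1 := by
  rw [eval_P₁, eval_P₂, mul_comm (_ + m ^ 2), mul_comm (_ + m ^ 2)] at h
  exact dvd_of_isGcdOf_of_not_sq_dvd X_prime ⟨x * z, by ring⟩ (not_X_sq_dvd_xyz 1)
    ⟨x ^ 2 * z ^ 2, by ring⟩ ⟨x ^ 2 * z, by ring⟩ ⟨x * z ^ 2, by ring⟩ h

theorem not_x_dvd_and_y_dvd_sub_one (m : Z3) : ¬ (x ∣ m ∧ y ∣ m - 1) := by
  rintro ⟨hx, hy⟩
  have h₀ : MvPolynomial.constantCoeff m = 0 := by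
    simpa [x] using map_dvd MvPolynomial.constantCoeff hx
  have h₁ : MvPolynomial.constantCoeff m - 1 = 0 := by
    simpa [y] using map_dvd MvPolynomial.constantCoeff hy
  simp [h₀] at h₁

theorem gcd_not_stable_counterexample :
    P₁ ≠ 0 ∧ P₂ ≠ 0 ∧
    -- coprime in ℚ(x,y,z)[t]
    (∀ d : Polynomial (FractionRing Z3),
      d ∣ P₁.map (algebraMap Z3 (FractionRing Z3)) →
      d ∣ P₂.map (algebraMap Z3 (FractionRing Z3)) → IsUnit d) ∧
    IsGcdOf (x * y ^ 2 * z) (P₁.eval 0) (P₂.eval 0) ∧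
    IsGcdOf (x ^ 2 * y * z ^ 2) (P₁.eval 1) (P₂.eval 1) ∧
    IsGcdOf (x * y * z) (x * y ^ 2 * z) (x ^ 2 * y * z ^ 2) ∧
    ¬ ∃ m : Z3, IsGcdOf (x * y * z) (P₁.eval m) (P₂.eval m) := by
  refine ⟨P₁_monic.ne_zero, P₂_monic.ne_zero,
    fun _ h₁ h₂ => isCoprime_map_P₁_P₂.isUnit_of_dvd' h₁ h₂,
    isGcdOf_eval_zero, isGcdOf_eval_one, isGcdOf_xyz, ?_⟩
  rintro ⟨m, hm⟩
  exact not_x_dvd_and_y_dvd_sub_one m ⟨x_dvd_of_isGcdOf hm, y_dvd_sub_one_of_isGcdOf hm⟩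

end GcdCounterexample
end

section
/- Let Z be an integral domain, let k, n ≥ 1, and let P ∈ Z[t_1,…,t_k,y_1,…,y_n] be a nonzero polynomial. Let p be a prime element of Z that does not divide P (i.e., p does not divide all coefficients of P, so P is nonzero modulo p). If p is a fixed divisor of P with respect to t = (t_1,…,t_k), i.e., p divides P(m,y) in Z[y_1,…,y_n] for every m ∈ Z^k, then the quotient ring Z/pZ is finite of cardinality at most max_{1 ≤ i ≤ k} deg_{t_i}(P). -/
/-!
Reduce modulo `p`: over the domain `Z ⧸ (p)` the image of `P` is nonzero, yet all of its
specializations in `t` vanish. Read as a polynomial in `t` with coefficients in the domain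
`(Z ⧸ (p))[y]`, the combinatorial Nullstellensatz forbids this on any grid `S^k` whose side `S`
has more points than every `t`-degree, so `Z ⧸ (p)` has at most `max_i deg_{t_i} P` elements.
-/

open MvPolynomial

/-- Specialization of the first block of variables `t` at a point `m`, leaving the
variables `y` untouched. -/
noncomputable def specializeT {Z : Type*} [CommRing Z] {k n : ℕ} (m : Fin k → Z) :
    MvPolynomial (Fin k ⊕ Fin n) Z →ₐ[Z] MvPolynomial (Fin n) Z :=
  aeval (Sum.elim (fun i => (C (m i) : MvPolynomial (Fin n) Z)) X)

namespace MvPolynomial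

section

variable {R : Type*} [CommSemiring R] {σ τ : Type*}

lemma degreeOf_monomial_le (s : σ →₀ ℕ) (i : σ) (a : R) : degreeOf i (monomial s a) ≤ s i := by
  rcases eq_or_ne a 0 with rfl | ha
  · simp
  · exact (degreeOf_monomial_eq s i ha).le

lemma degreeOf_map_le {S : Type*} [CommSemiring S] (f : R →+* S) (i : σ) (p : MvPolynomial σ R) :
    degreeOf i (map f p) ≤ degreeOf i p :=
  degreeOf_le_iff.mpr fun _ hm => monomial_le_degreeOf i (support_map_subset f p hm)

lemma sumRingEquiv_monomial (m : (σ ⊕ τ) →₀ ℕ) (c : R) :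
    sumRingEquiv R σ τ (monomial m c) =
      monomial (m.comapDomain Sum.inl Sum.inl_injective.injOn)
        (monomial (m.comapDomain Sum.inr Sum.inr_injective.injOn) c) := by
  simp [sumRingEquiv, monomial]

lemma degreeOf_sumRingEquiv_le (i : σ) (f : MvPolynomial (σ ⊕ τ) R) :
    degreeOf i (sumRingEquiv R σ τ f) ≤ degreeOf (Sum.inl i) f := by
  conv_lhs => rw [f.as_sum, map_sum]
  refine (degreeOf_sum_le _ _ _).trans (Finset.sup_le fun m hm => ?_)
  rw [sumRingEquiv_monomial]
  exact (degreeOf_monomial_le _ _ _).trans (monomial_le_degreeOf _ hm)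

lemma eval_C_sumRingEquiv (m : σ → R) (f : MvPolynomial (σ ⊕ τ) R) :
    eval (fun i => C (m i)) (sumRingEquiv R σ τ f) = aeval (Sum.elim (fun i => C (m i)) X) f := by
  induction f using MvPolynomial.induction_on with
  | C a => simp
  | add p q hp hq => simp [hp, hq]
  | mul_X p s ih => cases s <;> simp [ih]

end

section

variable {R : Type*} [CommRing R] [IsDomain R] {σ τ : Type*}

theorem eq_zero_of_forall_aeval_sumElim_eq_zero [Finite σ] (S : Finset R)
    (f : MvPolynomial (σ ⊕ τ) R) (hdeg : ∀ i, degreeOf (Sum.inl i) f < S.card)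
    (hf : ∀ m : σ → R, (∀ i, m i ∈ S) → aeval (Sum.elim (fun i => C (m i)) X) f = 0) : f = 0 := by
  classical
  apply (sumRingEquiv R σ τ).injective
  rw [map_zero]
  refine eq_zero_of_eval_zero_at_prod_finset _ (fun _ => S.image C) (fun i => ?_) fun x hx => ?_
  · rw [Finset.card_image_of_injective _ (C_injective _ _)]
    exact (degreeOf_sumRingEquiv_le i f).trans_lt (hdeg i)
  · choose m hmS hm using fun i => Finset.mem_image.mp (hx i)
    rw [show x = fun i => C (m i) from _root_.funext fun i => (hm i).symm, eval_C_sumRingEquiv]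
    exact hf m hmS

theorem finite_and_natCard_le_of_forall_aeval_sumElim_eq_zero [Fintype σ]
    {f : MvPolynomial (σ ⊕ τ) R} (hf₀ : f ≠ 0)
    (hf : ∀ m : σ → R, aeval (Sum.elim (fun i => C (m i)) X) f = 0) :
    Finite R ∧ Nat.card R ≤ Finset.univ.sup fun i => degreeOf (Sum.inl i) f := by
  set D := Finset.univ.sup fun i => degreeOf (Sum.inl i) f
  have hcard : ∀ S : Finset R, S.card ≤ D := fun S => by
    by_contra! hS
    exact hf₀ <| eq_zero_of_forall_aeval_sumElim_eq_zero S f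
      (fun i => (Finset.le_sup (Finset.mem_univ i)).trans_lt hS)
      fun m _ => hf m
  have hfin : Finite R := by
    by_contra! h
    obtain ⟨S, hS⟩ := Infinite.exists_subset_card_eq R (D + 1)
    have := hcard S
    omega
  have := Fintype.ofFinite R
  exact ⟨hfin, by simpa [Nat.card_eq_fintype_card] using hcard Finset.univ⟩

end

end MvPolynomial

lemma map_specializeT {Z S : Type*} [CommRing Z] [CommRing S] {k n : ℕ} (f : Z →+* S)
    (m : Fin k → Z) (P : MvPolynomial (Fin k ⊕ Fin n) Z) :
    map f (specializeT m P) = specializeT (f ∘ m) (map f P) := by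
  induction P using MvPolynomial.induction_on with
  | C a => simp [specializeT]
  | add p q hp hq => simp [hp, hq]
  | mul_X p s ih => cases s <;> simp_all [specializeT]

theorem fixed_prime_divisor_small_residue_general
    (Z : Type*) [CommRing Z]
    (k n : ℕ)
    (P : MvPolynomial (Fin k ⊕ Fin n) Z)
    (p : Z) (hp : Prime p)
    (hnotdvd : ¬ (C p ∣ P))
    (hfix : ∀ m : Fin k → Z, C p ∣ specializeT m P) :
    Finite (Z ⧸ Ideal.span {p}) ∧
      Nat.card (Z ⧸ Ideal.span {p}) ≤
        Finset.univ.sup (fun i : Fin k => degreeOf (Sum.inl i) P) := by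
  have : (Ideal.span {p}).IsPrime := (Ideal.span_singleton_prime hp.ne_zero).mpr hp
  set q := Ideal.Quotient.mk (Ideal.span {p})
  have hdvd {ι : Type} (Q : MvPolynomial ι Z) : C p ∣ Q ↔ map q Q = 0 :=
    C_dvd_iff_map_hom_eq_zero q p (Ideal.Quotient.eq_zero_iff_dvd p) Q
  obtain ⟨hfin, hcard⟩ :=
    finite_and_natCard_le_of_forall_aeval_sumElim_eq_zero ((hdvd P).not.mp hnotdvd) fun m => by
      obtain ⟨m₀, rfl⟩ := Ideal.Quotient.mk_surjective.comp_left m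
      exact (map_specializeT q m₀ P).symm.trans ((hdvd _).mp (hfix m₀))
  exact ⟨hfin, hcard.trans (Finset.sup_mono_fun fun i _ => degreeOf_map_le q _ P)⟩

theorem fixed_prime_divisor_small_residue
    (Z : Type*) [CommRing Z] [IsDomain Z]
    (k n : ℕ) (hk : 1 ≤ k) (hn : 1 ≤ n)
    (P : MvPolynomial (Fin k ⊕ Fin n) Z) (hP : P ≠ 0)
    (p : Z) (hp : Prime p)
    (hnotdvd : ¬ (C p ∣ P))
    (hfix : ∀ m : Fin k → Z, C p ∣ specializeT m P) :
    Finite (Z ⧸ Ideal.span {p}) ∧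
      Nat.card (Z ⧸ Ideal.span {p}) ≤
        Finset.univ.sup (fun i : Fin k => degreeOf (Sum.inl i) P) :=
  fixed_prime_divisor_small_residue_general Z k n P p hp hnotdvd hfix
end

section
/- Let Z be a near UFD such that for every prime element p of Z the quotient Z/pZ is infinite. Let k, n, s ≥ 1 and let P_1,…,P_s ∈ Z[t_1,…,t_k,y_1,…,y_n] be polynomials each of which is primitive with respect to Z. Then the product P_1⋯P_s has no fixed divisor in Z with respect to t = (t_1,…,t_k): for every nonzero non-unit a ∈ Z there exists m ∈ Z^k such that a does not divide (P_1⋯P_s)(m,y) in Z[y_1,…,y_n]. -/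
open MvPolynomial

/-- A near UFD: an integral domain in which every nonzero element has only finitely
many prime divisors up to associates, and every nonzero non-unit has at least one
prime divisor. -/
def IsNearUFD (Z : Type*) [CommRing Z] [IsDomain Z] : Prop :=
  (∀ a : Z, a ≠ 0 →
    ∃ s : Finset Z, ∀ p : Z, Prime p → p ∣ a → ∃ q ∈ s, Associated p q) ∧
  (∀ a : Z, a ≠ 0 → ¬ IsUnit a → ∃ p : Z, Prime p ∧ p ∣ a)

theorem no_fixed_divisor_of_primitive_nearUFD
    (Z : Type*) [CommRing Z] [IsDomain Z]
    (hZ : IsNearUFD Z)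
    (hres : ∀ p : Z, Prime p → Infinite (Z ⧸ Ideal.span {p}))
    (k n s : ℕ) (hk : 1 ≤ k) (hn : 1 ≤ n) (hs : 1 ≤ s)
    (P : Fin s → MvPolynomial (Fin k ⊕ Fin n) Z)
    (hprim : ∀ i, ∀ a : Z, (∀ d, a ∣ coeff d (P i)) → IsUnit a) :
    ∀ a : Z, a ≠ 0 → ¬ IsUnit a →
      ∃ m : Fin k → Z, ¬ (C a ∣ specializeT m (∏ i, P i)) := by
  intro a ha hau
  obtain ⟨p, hp, hpa⟩ := hZ.2 a ha hau
  haveI : (Ideal.span {p}).IsPrime := (Ideal.span_singleton_prime hp.ne_zero).mpr hp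
  haveI := hres p hp
  let φ : Z →+* Z ⧸ Ideal.span {p} := Ideal.Quotient.mk (Ideal.span {p})
  have hmapne : ∀ i, MvPolynomial.map φ (P i) ≠ 0 := by
    intro i h
    apply hp.not_unit
    apply hprim i p
    intro d
    have h2 := congrArg (coeff d) h
    rw [coeff_map, coeff_zero] at h2
    rwa [← Ideal.mem_span_singleton, ← Ideal.Quotient.eq_zero_iff_mem]
  have hQ : MvPolynomial.map φ (∏ i, P i) ≠ 0 := by
    rw [map_prod]
    exact Finset.prod_ne_zero_iff.mpr fun i _ => hmapne i
  have hx : ∃ x : Fin k ⊕ Fin n → Z ⧸ Ideal.span {p},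
      eval x (MvPolynomial.map φ (∏ i, P i)) ≠ 0 := by
    by_contra h
    push_neg at h
    exact hQ (MvPolynomial.funext fun x => (h x).trans (map_zero _).symm)
  obtain ⟨x, hx⟩ := hx
  choose m hm using fun i => Ideal.Quotient.mk_surjective (x (Sum.inl i))
  choose b hb using fun j => Ideal.Quotient.mk_surjective (x (Sum.inr j))
  refine ⟨m, fun hdvd => hx ?_⟩
  have hdvd' : (C p : MvPolynomial (Fin n) Z) ∣ specializeT m (∏ i, P i) :=
    dvd_trans (_root_.map_dvd (C : Z →+* MvPolynomial (Fin n) Z) hpa) hdvd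
  have hpd : p ∣ eval b (specializeT m (∏ i, P i)) := by
    obtain ⟨c, hc⟩ := hdvd'
    exact ⟨eval b c, by rw [hc, map_mul, eval_C]⟩
  have h1 : eval b (specializeT m (∏ i, P i)) = eval (Sum.elim m b) (∏ i, P i) := by
    show (eval b) (eval₂ (algebraMap Z _) (Sum.elim (fun i => C (m i)) X) _) = _
    rw [MvPolynomial.eval₂_comp_left (eval b)]
    congr 1
    · ext z
      simp
    · funext v
      cases v <;> simp
  have h2 : φ (eval (Sum.elim m b) (∏ i, P i))
      = eval x (MvPolynomial.map φ (∏ i, P i)) := by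
    rw [eval_map]
    show φ (eval₂ (RingHom.id Z) (Sum.elim m b) _) = _
    rw [MvPolynomial.eval₂_comp_left φ]
    congr 1
    funext v
    cases v
    · simpa using hm _
    · simpa using hb _
  obtain ⟨c, hc⟩ := hpd
  rw [← h2, ← h1, hc, map_mul]
  have : φ p = 0 := by
    rw [Ideal.Quotient.eq_zero_iff_mem]
    exact Ideal.mem_span_singleton_self p
  rw [this, zero_mul]
end

section
/- Let Z be an integral domain. In each of the following cases, for every prime element p of Z, the quotient ring Z/pZ is infinite: (i) Z = R[u_1,…,u_r] is a polynomial ring in r ≥ 1 variables over an infinite integral domain R; (ii) Z = R[u_1,…,u_r] is a polynomial ring in r ≥ 2 variables over an arbitrary integral domain R; (iii) Z contains an infinite field. -/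
/-!
Modulo a non-unit `p`, an infinite field embeds into the residue ring, which settles (iii). For a
polynomial ring `S[X]` over an infinite domain `S`, either `p` has positive degree, and then the
constants `S` embed into `S[X] / (p)` because no nonzero constant is divisible by `p`, or
`p = C c` with `c` a non-unit, and then `S[X] / (p) ≅ (S / (c))[X]` is a polynomial ring over a
nontrivial ring. Cases (i) and (ii) follow by writing `R[u₁, …, u_{n+1}] = R[u₁, …, uₙ][X]`,
since `R[u₁, …, uₙ]` is infinite when `R` is, or when `n ≥ 1`.
-/

open Polynomial

theorem Ideal.Quotient.nontrivial_span_singleton {A : Type*} [CommRing A] {p : A}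
    (hp : ¬IsUnit p) : Nontrivial (A ⧸ Ideal.span {p}) :=
  Ideal.Quotient.nontrivial_iff.mpr (Ideal.span_singleton_ne_top hp)

theorem infinite_quotient_span_singleton_of_algebra (F : Type*) {A : Type*} [Field F] [Infinite F]
    [CommRing A] [Algebra F A] {p : A} (hp : ¬IsUnit p) : Infinite (A ⧸ Ideal.span {p}) :=
  have := Ideal.Quotient.nontrivial_span_singleton hp
  Infinite.of_injective _ ((Ideal.Quotient.mk _).comp (algebraMap F A)).injective

theorem RingEquiv.infinite_quotient_span_singleton_iff {A B : Type*} [CommRing A] [CommRing B]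
    (e : A ≃+* B) (p : A) :
    Infinite (A ⧸ Ideal.span {p}) ↔ Infinite (B ⧸ Ideal.span {e p}) :=
  (Ideal.quotientEquiv _ _ e (by rw [Ideal.map_span, Set.image_singleton]; rfl)).infinite_iff

namespace Polynomial

variable {S : Type*} [CommRing S]

theorem infinite_quotient_span_C {c : S} (hc : ¬IsUnit c) : Infinite (S[X] ⧸ Ideal.span {C c}) := by
  have := Ideal.Quotient.nontrivial_span_singleton hc
  have e := (Ideal.span {c}).polynomialQuotientEquivQuotientPolynomial
  rw [Ideal.map_span, Set.image_singleton] at e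
  exact e.toEquiv.infinite_iff.mp inferInstance

theorem injective_quotient_mk_comp_C [IsDomain S] {p : S[X]} (hp : 0 < p.natDegree) :
    Function.Injective ((Ideal.Quotient.mk (Ideal.span {p})).comp C) := by
  rw [injective_iff_map_eq_zero]
  intro a ha
  by_contra h
  rw [RingHom.comp_apply, Ideal.Quotient.eq_zero_iff_mem, Ideal.mem_span_singleton] at ha
  have := natDegree_le_of_dvd ha (C_ne_zero.2 h)
  rw [natDegree_C] at this
  omega

theorem infinite_quotient_span_singleton [IsDomain S] [Infinite S] {p : S[X]} (hp : ¬IsUnit p) :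
    Infinite (S[X] ⧸ Ideal.span {p}) := by
  rcases Nat.eq_zero_or_pos p.natDegree with h | h
  · rw [eq_C_of_natDegree_eq_zero h] at hp ⊢
    exact infinite_quotient_span_C (mt isUnit_C.2 hp)
  · exact Infinite.of_injective _ (injective_quotient_mk_comp_C h)

end Polynomial

theorem MvPolynomial.infinite_quotient_span_singleton_fin_succ {R : Type*} [CommRing R] [IsDomain R]
    {n : ℕ} [Infinite (MvPolynomial (Fin n) R)] {p : MvPolynomial (Fin (n + 1)) R}
    (hp : ¬IsUnit p) : Infinite (MvPolynomial (Fin (n + 1)) R ⧸ Ideal.span {p}) := by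
  let e := (finSuccEquiv R n).toRingEquiv
  rw [e.infinite_quotient_span_singleton_iff]
  exact Polynomial.infinite_quotient_span_singleton (by rwa [MulEquiv.isUnit_map e])

theorem infinite_residue_of_prime :
    -- (i) polynomial ring in r ≥ 1 variables over an infinite domain
    (∀ (R : Type) [CommRing R] [IsDomain R] [Infinite R] (r : ℕ), 1 ≤ r →
      ∀ p : MvPolynomial (Fin r) R, Prime p →
        Infinite (MvPolynomial (Fin r) R ⧸ Ideal.span {p})) ∧
    -- (ii) polynomial ring in r ≥ 2 variables over an arbitrary domain
    (∀ (R : Type) [CommRing R] [IsDomain R] (r : ℕ), 2 ≤ r →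
      ∀ p : MvPolynomial (Fin r) R, Prime p →
        Infinite (MvPolynomial (Fin r) R ⧸ Ideal.span {p})) ∧
    -- (iii) a domain containing an infinite field
    (∀ (Z F : Type) [CommRing Z] [IsDomain Z] [Field F] [Infinite F] [Algebra F Z],
      ∀ p : Z, Prime p → Infinite (Z ⧸ Ideal.span {p})) := by
  refine ⟨?_, ?_, ?_⟩
  · rintro R _ _ _ r hr p hp
    obtain ⟨n, rfl⟩ : ∃ n, r = n + 1 := ⟨r - 1, by omega⟩
    exact MvPolynomial.infinite_quotient_span_singleton_fin_succ hp.not_isUnit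
  · rintro R _ _ r hr p hp
    obtain ⟨n, rfl⟩ : ∃ n, r = n + 1 := ⟨r - 1, by omega⟩
    have : Nonempty (Fin n) := ⟨⟨0, by omega⟩⟩
    exact MvPolynomial.infinite_quotient_span_singleton_fin_succ hp.not_isUnit
  · intro Z F _ _ _ _ _ p hp
    exact infinite_quotient_span_singleton_of_algebra F hp.not_isUnit
end

section
/- Let Z be an integral domain, let 0 ≤ ρ ≤ r, let I_1,…,I_ρ be maximal ideals of Z and let I_{ρ+1},…,I_r be prime ideals of Z that are not maximal. Assume that I_j ⊄ I_{j'} for any two distinct indices j, j' ∈ {1,…,r}. Let k, n ≥ 1 and let F ∈ Z[t_1,…,t_k,y_1,…,y_n] be a polynomial that is nonzero modulo each of the ideals I_{ρ+1},…,I_r. Then for every tuple (a_1,…,a_ρ) ∈ (Z^k)^ρ there exists m ∈ Z^k such that m ≡ a_j (mod I_j) componentwise for each j = 1,…,ρ, and F(m,y) ≢ 0 (mod I_j) for each j = ρ+1,…,r (i.e., not all coefficients of F(m,y) ∈ Z[y_1,…,y_n] lie in I_j). -/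
open MvPolynomial Pointwise

section Auxiliary

lemma eval_mem_of_coeff_mem {Z : Type*} [CommRing Z] {σ : Type*} (Idl : Ideal Z)
    (p : MvPolynomial σ Z) (h : ∀ d, coeff d p ∈ Idl) (x : σ → Z) : eval x p ∈ Idl := by
  rw [eval_eq]
  exact Ideal.sum_mem _ fun d _ => Ideal.mul_mem_right _ _ (h d)

lemma map_mk_ne_zero_iff {Z : Type*} [CommRing Z] {σ : Type*} (Idl : Ideal Z)
    (p : MvPolynomial σ Z) :
    MvPolynomial.map (Ideal.Quotient.mk Idl) p ≠ 0 ↔ ∃ d, coeff d p ∉ Idl := by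
  simp only [Ne, MvPolynomial.ext_iff, not_forall, coeff_map, coeff_zero,
    Ideal.Quotient.eq_zero_iff_mem]

/-- B. H. Neumann style avoidance: a ring cannot be covered by finitely many cosets of
ideals of infinite index. -/
lemma exists_avoid {Z : Type*} [CommRing Z] {ι : Type*} (s : Finset ι) (I : ι → Ideal Z)
    (hinf : ∀ i ∈ s, Infinite (Z ⧸ I i)) (T : ι → Finset Z) :
    ∃ w : Z, ∀ i ∈ s, ∀ t ∈ T i, w - t ∉ I i := by
  by_contra hcon
  push_neg at hcon
  have hcovers : ⋃ p ∈ s.sigma (fun i => T i),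
      (p.2 : Z) +ᵥ ((I p.1).toAddSubgroup : Set Z) = Set.univ := by
    ext w
    simp only [Set.mem_iUnion, Finset.mem_sigma, Set.mem_univ, iff_true]
    obtain ⟨i, hi, t, ht, hm⟩ := hcon w
    refine ⟨⟨i, t⟩, ⟨hi, ht⟩, ?_⟩
    rw [Set.mem_vadd_set_iff_neg_vadd_mem]
    simpa [neg_add_eq_sub] using hm
  obtain ⟨p, hp, hfin⟩ := AddSubgroup.exists_finiteIndex_of_leftCoset_cover hcovers
  haveI : Infinite (Z ⧸ I p.1) := hinf p.1 (Finset.mem_sigma.mp hp).1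
  haveI : Infinite (Z ⧸ (I p.1).toAddSubgroup) := ‹Infinite (Z ⧸ I p.1)›
  exact hfin.index_ne_zero (Nat.card_eq_zero_of_infinite)

lemma ringHom_polyEval {R S : Type*} [CommRing R] [CommRing S] (g : R →+* S)
    (p : Polynomial R) (a : R) : g (p.eval a) = (p.map g).eval (g a) := by
  rw [Polynomial.eval_map]
  have := Polynomial.hom_eval₂ p (RingHom.id R) g a
  rw [RingHom.comp_id] at this; exact this

lemma eval_fin0 {Z : Type*} [CommRing Z] (x : Fin 0 → Z) (p : MvPolynomial (Fin 0) Z) :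
    eval x p = coeff 0 p := by
  rw [eval_eq]
  have hsub : p.support ⊆ {0} := fun d _ => Finset.mem_singleton.mpr (Subsingleton.elim d 0)
  rw [Finset.sum_subset hsub (fun d _ hd => by
    rw [notMem_support_iff.mp hd, zero_mul])]
  simp

/-- Key simultaneous non-vanishing lemma: finitely many polynomials, each nonzero modulo a
prime ideal of infinite index, admit a common evaluation point avoiding all the ideals. -/
lemma exists_eval_notMem {Z : Type*} [CommRing Z] (s : ℕ) {ι : Type*} (t : Finset ι)
    (I : ι → Ideal Z) (hI : ∀ i ∈ t, (I i).IsPrime) (hinf : ∀ i ∈ t, Infinite (Z ⧸ I i)) :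
    ∀ G : ι → MvPolynomial (Fin s) Z, (∀ i ∈ t, ∃ d, coeff d (G i) ∉ I i) →
      ∃ w : Fin s → Z, ∀ i ∈ t, eval w (G i) ∉ I i := by
  classical
  induction s with
  | zero =>
    intro G hG
    refine ⟨fun _ => 0, fun i hi => ?_⟩
    obtain ⟨d, hd⟩ := hG i hi
    rw [eval_fin0]
    rwa [Subsingleton.elim (0 : Fin 0 →₀ ℕ) d]
  | succ s ih =>
    intro G hG
    set q : ι → Polynomial (MvPolynomial (Fin s) Z) := fun i => finSuccEquiv Z s (G i) with hqdef
    have hqbar : ∀ i ∈ t, (q i).map (MvPolynomial.map (Ideal.Quotient.mk (I i))) ≠ 0 := by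
      intro i hi
      obtain ⟨d, hd⟩ := hG i hi
      have h1 : coeff d.tail (Polynomial.coeff (q i) (d 0)) ∉ I i := by
        rw [finSuccEquiv_coeff_coeff, Finsupp.cons_tail]; exact hd
      intro h0
      apply h1
      have h2 : Polynomial.coeff ((q i).map (MvPolynomial.map (Ideal.Quotient.mk (I i)))) (d 0)
          = 0 := by rw [h0]; simp
      rw [Polynomial.coeff_map] at h2
      have h3 := congrArg (coeff d.tail) h2
      rw [coeff_map, coeff_zero] at h3
      exact Ideal.Quotient.eq_zero_iff_mem.mp h3
    set T : ι → Finset Z := fun i =>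
      if hi : i ∈ t then
        haveI := hI i hi
        (((q i).map (MvPolynomial.map (Ideal.Quotient.mk (I i)))).roots.toFinset).image
          (fun pz => if h : ∃ z : Z,
              (MvPolynomial.C (Ideal.Quotient.mk (I i) z) : MvPolynomial (Fin s) (Z ⧸ I i)) = pz
            then h.choose else 0)
      else ∅ with hTdef
    obtain ⟨w₀, hw₀⟩ := exists_avoid t I hinf T
    set G' : ι → MvPolynomial (Fin s) Z :=
      fun i => Polynomial.eval (MvPolynomial.C w₀) (q i) with hG'def
    have hcomm : ∀ i, MvPolynomial.map (Ideal.Quotient.mk (I i)) (G' i)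
        = ((q i).map (MvPolynomial.map (Ideal.Quotient.mk (I i)))).eval
            (MvPolynomial.C (Ideal.Quotient.mk (I i) w₀)) := by
      intro i
      rw [hG'def]
      simp only
      rw [ringHom_polyEval (MvPolynomial.map (Ideal.Quotient.mk (I i))) (q i)
        (MvPolynomial.C w₀), MvPolynomial.map_C]
    have hG'h : ∀ i ∈ t, ∃ d, coeff d (G' i) ∉ I i := by
      intro i hi
      haveI := hI i hi
      rw [← map_mk_ne_zero_iff (I i)]
      rw [hcomm i]
      intro h0
      have hroot : (MvPolynomial.C (Ideal.Quotient.mk (I i) w₀) : MvPolynomial (Fin s) (Z ⧸ I i))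
          ∈ (((q i).map (MvPolynomial.map (Ideal.Quotient.mk (I i)))).roots).toFinset := by
        rw [Multiset.mem_toFinset, Polynomial.mem_roots']
        exact ⟨hqbar i hi, h0⟩
      have hex : ∃ z : Z, (MvPolynomial.C (Ideal.Quotient.mk (I i) z)
          : MvPolynomial (Fin s) (Z ⧸ I i))
          = MvPolynomial.C (Ideal.Quotient.mk (I i) w₀) := ⟨w₀, rfl⟩
      set v : Z := hex.choose with hv
      have hvmem : v ∈ T i := by
        rw [hTdef]
        simp only [dif_pos hi]
        refine Finset.mem_image.mpr ⟨_, hroot, ?_⟩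
        rw [dif_pos hex]
      have hveq : Ideal.Quotient.mk (I i) v = Ideal.Quotient.mk (I i) w₀ :=
        MvPolynomial.C_injective _ _ hex.choose_spec
      exact hw₀ i hi v hvmem (Ideal.Quotient.mk_eq_mk_iff_sub_mem w₀ v |>.mp hveq.symm)
    obtain ⟨w', hw'⟩ := ih G' hG'h
    refine ⟨Fin.cons w₀ w', fun i hi => ?_⟩
    have heq : eval (Fin.cons w₀ w') (G i) = eval w' (G' i) := by
      rw [eval_eq_eval_mv_eval']
      rw [hG'def]
      simp only
      rw [ringHom_polyEval (eval w' : MvPolynomial (Fin s) Z →+* Z) (q i) (MvPolynomial.C w₀),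
        eval_C]
    rw [heq]
    exact hw' i hi

lemma exists_eval_notMem_sum {Z : Type*} [CommRing Z] {k n : ℕ} {ι : Type*} (t : Finset ι)
    (I : ι → Ideal Z) (hI : ∀ i ∈ t, (I i).IsPrime) (hinf : ∀ i ∈ t, Infinite (Z ⧸ I i))
    (P : ι → MvPolynomial (Fin k ⊕ Fin n) Z) (hP : ∀ i ∈ t, ∃ d, coeff d (P i) ∉ I i) :
    ∃ w : Fin k ⊕ Fin n → Z, ∀ i ∈ t, eval w (P i) ∉ I i := by
  obtain ⟨w, hw⟩ := exists_eval_notMem (k + n) t I hI hinf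
    (fun i => rename finSumFinEquiv (P i))
    (fun i hi => by
      obtain ⟨d, hd⟩ := hP i hi
      exact ⟨d.mapDomain finSumFinEquiv,
        by rwa [coeff_rename_mapDomain _ finSumFinEquiv.injective]⟩)
  exact ⟨w ∘ finSumFinEquiv, fun i hi => by
    have := hw i hi
    rwa [eval_rename] at this⟩

lemma map_aeval_affine {R S : Type*} [CommRing R] [CommRing S] (f : R →+* S)
    {σ : Type*} (b c : σ → R) (p : MvPolynomial σ R) :
    MvPolynomial.map f
        ((aeval (fun s => C (b s) + C (c s) * X s) : MvPolynomial σ R →ₐ[R] MvPolynomial σ R) p)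
      = (aeval (fun s => C (f (b s)) + C (f (c s)) * X s) :
          MvPolynomial σ S →ₐ[S] MvPolynomial σ S) (MvPolynomial.map f p) := by
  have h : (MvPolynomial.map f).comp
        ((aeval (fun s => C (b s) + C (c s) * X s) :
          MvPolynomial σ R →ₐ[R] MvPolynomial σ R) : MvPolynomial σ R →+* MvPolynomial σ R)
      = ((aeval (fun s => C (f (b s)) + C (f (c s)) * X s) :
          MvPolynomial σ S →ₐ[S] MvPolynomial σ S) :
            MvPolynomial σ S →+* MvPolynomial σ S).comp (MvPolynomial.map f) := by
    apply ringHom_ext <;> intro x <;>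
      simp [algebraMap_eq, MvPolynomial.map_C, MvPolynomial.map_X]
  exact RingHom.congr_fun h p

lemma aeval_affine_inj_field {K : Type*} [Field K] {σ : Type*} (b c : σ → K)
    (hc : ∀ s, c s ≠ 0) :
    Function.Injective
      (aeval (fun s => C (b s) + C (c s) * X s) : MvPolynomial σ K →ₐ[K] MvPolynomial σ K) := by
  set L := (aeval (fun s => C (-(b s) / (c s)) + C (c s)⁻¹ * X s) :
      MvPolynomial σ K →ₐ[K] MvPolynomial σ K)
  have h : L.comp (aeval (fun s => C (b s) + C (c s) * X s)) = AlgHom.id K _ := by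
    apply algHom_ext
    intro s
    have h1 : c s * (-(b s) / (c s)) = - b s := by
      rw [mul_div_assoc']
      exact mul_div_cancel_left₀ _ (hc s)
    have h2 : c s * (c s)⁻¹ = 1 := mul_inv_cancel₀ (hc s)
    simp only [AlgHom.comp_apply, aeval_X, map_add, map_mul, aeval_C, algebraMap_eq, L,
      AlgHom.id_apply]
    rw [mul_add, ← C_mul, h1, ← mul_assoc, ← C_mul, h2]
    rw [← add_assoc, ← C_add, add_neg_cancel, C_0, zero_add, C_1, one_mul]
  intro p q hpq
  have := congrArg L hpq
  rwa [← AlgHom.comp_apply, ← AlgHom.comp_apply, h, AlgHom.id_apply, AlgHom.id_apply] at this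

lemma aeval_affine_inj_domain {D : Type*} [CommRing D] [IsDomain D] {σ : Type*}
    (b c : σ → D) (hc : ∀ s, c s ≠ 0) :
    Function.Injective
      (aeval (fun s => C (b s) + C (c s) * X s) : MvPolynomial σ D →ₐ[D] MvPolynomial σ D) := by
  set K := FractionRing D
  set f : D →+* K := algebraMap D K with hf
  have hfi : Function.Injective f := IsFractionRing.injective D K
  intro p q hpq
  apply MvPolynomial.map_injective f hfi
  apply aeval_affine_inj_field (fun s => f (b s)) (fun s => f (c s))
    (fun s => by simpa using fun h => hc s (hfi (by simpa using h)))
  rw [← map_aeval_affine, ← map_aeval_affine, hpq]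

end Auxiliary

theorem chinese_remainder_refinement
    (Z : Type*) [CommRing Z] [IsDomain Z]
    (r ρ : ℕ) (hρr : ρ ≤ r)
    (I : Fin r → Ideal Z)
    (hmax : ∀ j : Fin r, (j : ℕ) < ρ → (I j).IsMaximal)
    (hprime : ∀ j : Fin r, ρ ≤ (j : ℕ) → (I j).IsPrime ∧ ¬ (I j).IsMaximal)
    (hincomp : ∀ j j' : Fin r, j ≠ j' → ¬ I j ≤ I j')
    (k n : ℕ) (hk : 1 ≤ k) (hn : 1 ≤ n)
    (F : MvPolynomial (Fin k ⊕ Fin n) Z)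
    (hF : ∀ j : Fin r, ρ ≤ (j : ℕ) → ∃ d, coeff d F ∉ I j) :
    ∀ a : Fin r → (Fin k → Z),
      ∃ m : Fin k → Z,
        (∀ j : Fin r, (j : ℕ) < ρ → ∀ i : Fin k, m i - a j i ∈ I j) ∧
        (∀ j : Fin r, ρ ≤ (j : ℕ) →
          ∃ d, coeff d (specializeT m F) ∉ I j) := by
  classical
  intro a
  by_cases hr0 : r = 0
  · subst hr0
    exact ⟨fun _ => 0, fun j => j.elim0, fun j => j.elim0⟩
  have hr : 0 < r := Nat.pos_of_ne_zero hr0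
  -- Chinese remainder for the maximal ideals
  have hCRT : ∀ i : Fin k, ∃ x : Z, ∀ j : Fin r, (j : ℕ) < ρ → x - a j i ∈ I j := by
    intro i
    have hco : Pairwise (Function.onFun IsCoprime fun j : {j : Fin r // (j : ℕ) < ρ} => I j.1) := by
      intro j j' hne
      have hne' : j.1 ≠ j'.1 := fun h => hne (Subtype.ext h)
      have hne'' : I j.1 ≠ I j'.1 := fun h => hincomp j.1 j'.1 hne' (le_of_eq h)
      exact (Ideal.isCoprime_iff_sup_eq).mpr ((hmax j.1 j.2).coprime_of_ne (hmax j'.1 j'.2) hne'')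
    obtain ⟨x, hx⟩ := Ideal.quotientInfToPiQuotient_surj hco
      (fun j => Ideal.Quotient.mk _ (a j.1 i))
    obtain ⟨y, rfl⟩ := Ideal.Quotient.mk_surjective x
    refine ⟨y, fun j hj => ?_⟩
    have h := congrFun hx ⟨j, hj⟩
    rw [Ideal.quotientInfToPiQuotient_mk'] at h
    exact (Ideal.Quotient.mk_eq_mk_iff_sub_mem _ _).mp h
  choose m₀ hm₀ using hCRT
  -- choose `c` in all the maximal ideals, outside all the non-maximal primes
  set slo : Finset (Fin r) := Finset.univ.filter (fun j => (j : ℕ) < ρ) with hslo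
  set shi : Finset (Fin r) := Finset.univ.filter (fun j => ρ ≤ (j : ℕ)) with hshi
  set J : Ideal Z := ∏ j ∈ slo, I j with hJ
  have hJc : ∃ c, c ∈ J ∧ ∀ j ∈ shi, c ∉ I j := by
    have hns : ¬ ((J : Set Z) ⊆ ⋃ j ∈ (shi : Set (Fin r)), (I j : Set Z)) := by
      rw [Ideal.subset_union_prime ⟨0, hr⟩ ⟨0, hr⟩
        (fun j hj _ _ => (hprime j (Finset.mem_filter.mp hj).2).1)]
      rintro ⟨j, hj, hle⟩
      have hjρ : ρ ≤ (j : ℕ) := (Finset.mem_filter.mp hj).2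
      rw [(hprime j hjρ).1.prod_le] at hle
      obtain ⟨j', hj', hle'⟩ := hle
      have hlt : (j' : ℕ) < ρ := (Finset.mem_filter.mp hj').2
      refine hincomp j' j ?_ hle'
      intro h
      rw [h] at hlt
      omega
    obtain ⟨c, hcJ, hc⟩ := Set.not_subset.mp hns
    exact ⟨c, hcJ, fun j hj hcI => hc (Set.mem_biUnion (Finset.mem_coe.mpr hj) hcI)⟩
  obtain ⟨c, hcJ, hc⟩ := hJc
  have hclo : ∀ j : Fin r, (j : ℕ) < ρ → c ∈ I j := fun j hj =>
    (le_trans Ideal.prod_le_inf (Finset.inf_le (by simp [hslo, hj]))) hcJ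
  -- the translated-scaled polynomial G
  set bb : Fin k ⊕ Fin n → Z := Sum.elim m₀ (fun _ => 0) with hbb
  set cc : Fin k ⊕ Fin n → Z := Sum.elim (fun _ => c) (fun _ => 1) with hcc
  set Φ := (aeval (fun s => C (bb s) + C (cc s) * X s) :
    MvPolynomial (Fin k ⊕ Fin n) Z →ₐ[Z] MvPolynomial (Fin k ⊕ Fin n) Z) with hΦ
  set G := Φ F with hG
  have hinfq : ∀ j ∈ shi, Infinite (Z ⧸ I j) := by
    intro j hj
    have hjρ := (Finset.mem_filter.mp hj).2
    haveI := (hprime j hjρ).1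
    by_contra hfin
    haveI : Finite (Z ⧸ I j) := not_infinite_iff_finite.mp hfin
    exact (hprime j hjρ).2 (Ideal.Quotient.maximal_of_isField _ (Finite.isField_of_domain _))
  have hGnz : ∀ j ∈ shi, ∃ d, coeff d G ∉ I j := by
    intro j hj
    have hjρ := (Finset.mem_filter.mp hj).2
    haveI := (hprime j hjρ).1
    rw [← map_mk_ne_zero_iff (I j), hG, hΦ, map_aeval_affine (Ideal.Quotient.mk (I j)) bb cc F]
    have hcne : ∀ s : Fin k ⊕ Fin n, Ideal.Quotient.mk (I j) (cc s) ≠ 0 := by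
      intro s
      cases s with
      | inl i => simpa [hcc, Ideal.Quotient.eq_zero_iff_mem] using hc j hj
      | inr i => simp [hcc]
    have hFnz : MvPolynomial.map (Ideal.Quotient.mk (I j)) F ≠ 0 :=
      (map_mk_ne_zero_iff _ _).mpr (hF j hjρ)
    intro h0
    apply hFnz
    apply aeval_affine_inj_domain (fun s => Ideal.Quotient.mk (I j) (bb s))
      (fun s => Ideal.Quotient.mk (I j) (cc s)) hcne
    rw [h0, map_zero]
  obtain ⟨w, hw⟩ := exists_eval_notMem_sum shi I
    (fun j hj => (hprime j (Finset.mem_filter.mp hj).2).1) hinfq (fun _ => G) hGnz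
  set m : Fin k → Z := fun i => m₀ i + c * w (Sum.inl i) with hm
  refine ⟨m, ?_, ?_⟩
  · intro j hj i
    have h1 : m i - a j i = (m₀ i - a j i) + c * w (Sum.inl i) := by rw [hm]; ring
    rw [h1]
    exact Ideal.add_mem _ (hm₀ i j hj) (Ideal.mul_mem_right _ _ (hclo j hj))
  · intro j hjρ
    have hj : j ∈ shi := Finset.mem_filter.mpr ⟨Finset.mem_univ _, hjρ⟩
    by_contra h0
    push_neg at h0
    have hhom : ((aeval (w ∘ Sum.inr) : MvPolynomial (Fin n) Z →ₐ[Z] Z).comp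
        (specializeT m)) = (aeval w : MvPolynomial (Fin k ⊕ Fin n) Z →ₐ[Z] Z).comp Φ := by
      apply algHom_ext
      intro s
      cases s with
      | inl i => simp [specializeT, hΦ, hbb, hcc, hm]
      | inr i => simp [specializeT, hΦ, hbb, hcc]
    have hkey : aeval (R := Z) (w ∘ Sum.inr) (specializeT m F) = aeval (R := Z) w G := by
      rw [hG, hΦ]
      exact AlgHom.congr_fun hhom F
    have haeval_eq : ∀ {σ : Type} (x : σ → Z) (p : MvPolynomial σ Z),
        aeval (R := Z) x p = eval x p := by
      intro σ x p
      rw [aeval_def, eval, coe_eval₂Hom, Algebra.algebraMap_self]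
    have hmem := eval_mem_of_coeff_mem (I j) _ h0 (w ∘ Sum.inr)
    rw [← haeval_eq, hkey, haeval_eq] at hmem
    exact hw j hj hmem
end

section
/- Let Z be an integral domain such that every nonzero element of Z has only finitely many prime divisors up to associates. Then for every natural number B, there are only finitely many principal prime ideals pZ of Z whose quotient Z/pZ is finite of cardinality at most B. -/
/-!
If `Z ⧸ (p)` has `n` elements it is a finite field, so `p ∣ x ^ n - x` for every `x`. Fixing one
prime `p₀` with `#(Z ⧸ (p₀)) = n`, every prime with residue ring of size `n` divides the nonzero
element `p₀ ^ n - p₀`, hence is associate to one of its finitely many prime divisors.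
-/

open Ideal

section

variable {R : Type*} [CommRing R]

theorem Ideal.pow_card_quotient_sub_self_mem (I : Ideal R) [I.IsPrime]
    [Finite (R ⧸ I)] (x : R) : x ^ Nat.card (R ⧸ I) - x ∈ I := by
  classical
  have : Fintype (R ⧸ I) := Fintype.ofFinite _
  let : Field (R ⧸ I) := Fintype.fieldOfDomain _
  rw [← Quotient.eq_zero_iff_mem, map_sub, map_pow, Nat.card_eq_fintype_card,
    FiniteField.pow_card, sub_self]

theorem Prime.dvd_pow_card_quotient_sub_self {p : R} (hp : Prime p) [Finite (R ⧸ span {p})]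
    (x : R) : p ∣ x ^ Nat.card (R ⧸ span {p}) - x :=
  have := (span_singleton_prime hp.ne_zero).2 hp
  mem_span_singleton.1 ((span {p}).pow_card_quotient_sub_self_mem x)

theorem Prime.card_quotient_span_ne_one {p : R} (hp : Prime p) [Finite (R ⧸ span {p})] :
    Nat.card (R ⧸ span {p}) ≠ 1 := by
  have := Quotient.nontrivial_iff.2 ((span_singleton_prime hp.ne_zero).2 hp).ne_top
  exact (Finite.one_lt_card_iff_nontrivial.2 this).ne'

variable [IsDomain R]

theorem Prime.pow_sub_self_ne_zero {p : R} (hp : Prime p) {n : ℕ} (hn : n ≠ 1) :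
    p ^ n - p ≠ 0 := by
  rw [sub_ne_zero]
  rcases n with _ | _ | m
  · exact fun h => hp.ne_one (h.symm.trans (pow_zero p))
  · exact absurd rfl hn
  · intro h
    have h' : p * p ^ (m + 1) = p * 1 := by rwa [← pow_succ', mul_one]
    exact hp.not_isUnit (.of_pow_eq_one (mul_left_cancel₀ hp.ne_zero h') m.succ_ne_zero)

theorem finite_setOf_span_prime_dvd {a : R} (s : Finset R)
    (hs : ∀ p : R, Prime p → p ∣ a → ∃ q ∈ s, Associated p q) :
    {I : Ideal R | ∃ p : R, Prime p ∧ p ∣ a ∧ I = span {p}}.Finite := by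
  refine (s.finite_toSet.image fun q => span {q}).subset ?_
  rintro _ ⟨p, hp, hpa, rfl⟩
  obtain ⟨q, hq, hpq⟩ := hs p hp hpa
  exact ⟨q, hq, span_singleton_eq_span_singleton.2 hpq.symm⟩

theorem finite_setOf_span_prime_card_quotient_eq
    (hfin : ∀ a : R, a ≠ 0 →
      ∃ s : Finset R, ∀ p : R, Prime p → p ∣ a → ∃ q ∈ s, Associated p q) (n : ℕ) :
    {I : Ideal R | ∃ p : R, Prime p ∧ I = span {p} ∧
      Finite (R ⧸ I) ∧ Nat.card (R ⧸ I) = n}.Finite := by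
  rcases Set.eq_empty_or_nonempty
    {I : Ideal R | ∃ p : R, Prime p ∧ I = span {p} ∧ Finite (R ⧸ I) ∧ Nat.card (R ⧸ I) = n}
    with h | ⟨_, p₀, hp₀, rfl, _, rfl⟩
  · simp [h]
  obtain ⟨s, hs⟩ := hfin _ (hp₀.pow_sub_self_ne_zero hp₀.card_quotient_span_ne_one)
  refine (finite_setOf_span_prime_dvd s hs).subset ?_
  rintro _ ⟨p, hp, rfl, _, hcard⟩
  exact ⟨p, hp, hcard ▸ hp.dvd_pow_card_quotient_sub_self p₀, rfl⟩

end

theorem finitely_many_small_prime_ideals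
    (Z : Type*) [CommRing Z] [IsDomain Z]
    (hfin : ∀ a : Z, a ≠ 0 →
      ∃ s : Finset Z, ∀ p : Z, Prime p → p ∣ a → ∃ q ∈ s, Associated p q)
    (B : ℕ) :
    Set.Finite {I : Ideal Z | ∃ p : Z, Prime p ∧ I = Ideal.span {p} ∧
      Finite (Z ⧸ I) ∧ Nat.card (Z ⧸ I) ≤ B} := by
  refine ((Set.finite_Iic B).biUnion fun n _ =>
    finite_setOf_span_prime_card_quotient_eq hfin n).subset ?_
  rintro _ ⟨p, hp, rfl, hf, hB⟩
  exact Set.mem_biUnion (Set.mem_Iic.2 hB) ⟨p, hp, rfl, hf, rfl⟩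
end
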